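/- arXiv:2308.07006 — 8 statements merged into one kernel-verified Lean document; each statement's English description precedes it below -/
import Mathlib

section
/- Let T ∈ B(L²(X,μ)) have finite dynamical propagation, supported on a finite set S ⊆ Γ. Then there exists f ∈ L^∞(X,μ) such that T − M_f is supported on S \ {e}, i.e., for every measurable A and η ∈ L²A, (T − M_f)η is supported on (S∖{e})·A. -/
open MeasureTheory Filter Set ENNReal

section Aux

variable {X : Type*} [MeasurableSpace X] {μ : Measure X}

private noncomputable def mulFn (g : X → ℂ) (hg : Measurable g) {C : ℝ} (hC : ∀ x, ‖g x‖ ≤ C)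
    (u : Lp ℂ 2 μ) : Lp ℂ 2 μ :=
  MemLp.toLp (fun x => g x * u x)
    ((Lp.memLp u).of_le_mul (hg.aestronglyMeasurable.mul (Lp.aestronglyMeasurable u))
      (Eventually.of_forall fun x => by
        rw [norm_mul]
        exact mul_le_mul_of_nonneg_right (hC x) (norm_nonneg _)))

private lemma coeFn_mulFn (g : X → ℂ) (hg : Measurable g) {C : ℝ} (hC : ∀ x, ‖g x‖ ≤ C)
    (u : Lp ℂ 2 μ) : mulFn g hg hC u =ᵐ[μ] fun x => g x * u x :=
  MemLp.coeFn_toLp _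

private lemma norm_mulFn_le (g : X → ℂ) (hg : Measurable g) {C : ℝ} (hC : ∀ x, ‖g x‖ ≤ C)
    (u : Lp ℂ 2 μ) : ‖mulFn g hg hC u‖ ≤ C * ‖u‖ :=
  Lp.norm_le_mul_norm_of_ae_le_mul <| by
    filter_upwards [coeFn_mulFn g hg hC u] with x hx
    rw [hx, norm_mul]
    exact mul_le_mul_of_nonneg_right (hC x) (norm_nonneg _)

private noncomputable def mulCLM (g : X → ℂ) (hg : Measurable g) {C : ℝ} (hC : ∀ x, ‖g x‖ ≤ C) :
    Lp ℂ 2 μ →L[ℂ] Lp ℂ 2 μ :=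
  LinearMap.mkContinuous
    { toFun := mulFn g hg hC
      map_add' := fun u v => Lp.ext <| by
        filter_upwards [coeFn_mulFn g hg hC (u + v), coeFn_mulFn g hg hC u,
          coeFn_mulFn g hg hC v, Lp.coeFn_add u v,
          Lp.coeFn_add (mulFn g hg hC u) (mulFn g hg hC v)] with x h1 h2 h3 h4 h5
        rw [h1, h5, Pi.add_apply, h2, h3, h4, Pi.add_apply, mul_add]
      map_smul' := fun c u => Lp.ext <| by
        filter_upwards [coeFn_mulFn g hg hC (c • u), coeFn_mulFn g hg hC u,
          Lp.coeFn_smul c u, Lp.coeFn_smul c (mulFn g hg hC u)] with x h1 h2 h3 h4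
        simp only [RingHom.id_apply]
        rw [h1, h4, Pi.smul_apply, h2, h3, Pi.smul_apply, smul_eq_mul, smul_eq_mul]
        ring }
    C (fun u => norm_mulFn_le g hg hC u)

private lemma coeFn_mulCLM (g : X → ℂ) (hg : Measurable g) {C : ℝ} (hC : ∀ x, ‖g x‖ ≤ C)
    (u : Lp ℂ 2 μ) : mulCLM g hg hC u =ᵐ[μ] fun x => g x * u x :=
  coeFn_mulFn g hg hC u

end Aux

/-- If `T ∈ B(L²(X,μ))` has finite dynamical propagation, supported on a finite `S ⊆ Γ`,
then there exists `f ∈ L^∞(X,μ)` such that `T − M_f` is supported on `S \ {e}`. -/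
theorem stmt5 {X : Type*} [MeasurableSpace X] [StandardBorelSpace X]
    {Γ : Type*} [Group Γ] [Countable Γ] [DecidableEq Γ] [MulAction Γ X]
    (μ : Measure X) [IsProbabilityMeasure μ]
    (hmeas : ∀ γ : Γ, Measurable fun x : X => γ • x)
    (hns : ∀ γ : Γ, Measure.map (γ • ·) μ ≪ μ ∧ μ ≪ Measure.map (γ • ·) μ)
    (T : Lp ℂ 2 μ →L[ℂ] Lp ℂ 2 μ) (S : Finset Γ)
    (hT : ∀ A : Set X, MeasurableSet A → ∀ η : Lp ℂ 2 μ,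
      (∀ᵐ x ∂μ, x ∉ A → (η : X → ℂ) x = 0) →
      ∀ᵐ x ∂μ, (¬ ∃ s ∈ S, ∃ a ∈ A, x = s • a) → (T η : X → ℂ) x = 0) :
    ∃ f : X → ℂ, Measurable f ∧ (∃ C : ℝ, ∀ x, ‖f x‖ ≤ C) ∧
      ∀ A : Set X, MeasurableSet A → ∀ η : Lp ℂ 2 μ,
        (∀ᵐ x ∂μ, x ∉ A → (η : X → ℂ) x = 0) →
        ∀ᵐ x ∂μ, (¬ ∃ s ∈ S.erase 1, ∃ a ∈ A, x = s • a) →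
          (T η : X → ℂ) x - f x * (η : X → ℂ) x = 0 := by
  classical
  -- the "off-diagonal translate" set of a set `A`
  set EA : Set X → Set X := fun A => {x | ∃ s ∈ S.erase 1, ∃ a ∈ A, x = s • a} with hEAdef
  have hEAmeas : ∀ A : Set X, MeasurableSet A → MeasurableSet (EA A) := by
    intro A hA
    have hrw : EA A = ⋃ γ ∈ S.erase 1, (fun x : X => γ⁻¹ • x) ⁻¹' A := by
      ext z
      simp only [hEAdef, Set.mem_setOf_eq, Set.mem_iUnion, Set.mem_preimage]
      constructor
      · rintro ⟨s, hs, a, ha, rfl⟩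
        exact ⟨s, hs, by simpa [inv_smul_smul] using ha⟩
      · rintro ⟨s, hs, h⟩
        exact ⟨s, hs, _, h, (smul_inv_smul s z).symm⟩
    rw [hrw]
    exact (S.erase 1).measurableSet_biUnion (fun γ _ => (hmeas γ⁻¹) hA)
  -- the key localization lemma
  have key : ∀ (A B : Set X) (hA : MeasurableSet A) (hB : MeasurableSet B), B ⊆ A →
      ∀ᵐ x ∂μ, x ∉ EA A →
        (T (indicatorConstLp 2 hB (measure_ne_top μ B) (1 : ℂ)) : X → ℂ) x =
          B.indicator (fun _ => (1 : ℂ)) x *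
            (T (indicatorConstLp 2 hA (measure_ne_top μ A) (1 : ℂ)) : X → ℂ) x := by
    intro A B hA hB hBA
    set ξA := indicatorConstLp 2 hA (measure_ne_top μ A) (1 : ℂ)
    set ξB := indicatorConstLp 2 hB (measure_ne_top μ B) (1 : ℂ)
    have hsupp : ∀ᵐ x ∂μ, x ∉ A \ B → ((ξA - ξB : Lp ℂ 2 μ) : X → ℂ) x = 0 := by
      filter_upwards [Lp.coeFn_sub ξA ξB, indicatorConstLp_coeFn (p := 2) (hs := hA)
        (hμs := measure_ne_top μ A) (c := (1:ℂ)), indicatorConstLp_coeFn (p := 2) (hs := hB)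
        (hμs := measure_ne_top μ B) (c := (1:ℂ))] with x h1 h2 h3 hx
      rw [h1, Pi.sub_apply, h2, h3]
      by_cases hxA : x ∈ A
      · have hxB : x ∈ B := by
          by_contra hxB
          exact hx ⟨hxA, hxB⟩
        simp [Set.indicator_of_mem hxA, Set.indicator_of_mem hxB]
      · have hxB : x ∉ B := fun h => hxA (hBA h)
        simp [Set.indicator_of_notMem hxA, Set.indicator_of_notMem hxB]
    have hsuppB : ∀ᵐ x ∂μ, x ∉ B → (ξB : X → ℂ) x = 0 := by
      filter_upwards [indicatorConstLp_coeFn (p := 2) (hs := hB)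
        (hμs := measure_ne_top μ B) (c := (1:ℂ))] with x h1 hx
      rw [h1, Set.indicator_of_notMem hx]
    have h1 := hT (A \ B) (hA.diff hB) (ξA - ξB) hsupp
    have h2 := hT B hB ξB hsuppB
    have h3 : ((T (ξA - ξB) : Lp ℂ 2 μ) : X → ℂ) =ᵐ[μ]
        fun x => (T ξA : X → ℂ) x - (T ξB : X → ℂ) x := by
      rw [map_sub]
      filter_upwards [Lp.coeFn_sub (T ξA) (T ξB)] with x hx
      rw [hx, Pi.sub_apply]
    filter_upwards [h1, h2, h3] with x hx1 hx2 hx3 hxEA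
    by_cases hxB : x ∈ B
    · have hpre : ¬∃ s ∈ S, ∃ a ∈ A \ B, x = s • a := by
        rintro ⟨s, hs, a, ha, rfl⟩
        by_cases hs1 : s = 1
        · subst hs1
          rw [one_smul] at *
          exact ha.2 hxB
        · exact hxEA ⟨s, Finset.mem_erase.2 ⟨hs1, hs⟩, a, ha.1, rfl⟩
      have := hx1 hpre
      rw [hx3] at this
      have : (T ξB : X → ℂ) x = (T ξA : X → ℂ) x := by linear_combination -this
      rw [this, Set.indicator_of_mem hxB, one_mul]
    · have hpre : ¬∃ s ∈ S, ∃ a ∈ B, x = s • a := by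
        rintro ⟨s, hs, a, ha, rfl⟩
        by_cases hs1 : s = 1
        · subst hs1
          rw [one_smul] at hxB
          exact hxB ha
        · exact hxEA ⟨s, Finset.mem_erase.2 ⟨hs1, hs⟩, a, hBA ha, rfl⟩
      rw [hx2 hpre, Set.indicator_of_notMem hxB, zero_mul]
  -- a countable separating family of measurable sets, closed up to what we need
  obtain ⟨Sp, hSpMeas, hSpSep⟩ := exists_seq_separating X MeasurableSet.empty Set.univ
  set B : ℕ → Set X := fun n => if Even n then Sp (n / 2) else (Sp (n / 2))ᶜ with hBdef
  have hBmeas : ∀ n, MeasurableSet (B n) := by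
    intro n
    by_cases h : Even n <;> simp only [hBdef, h, if_true, if_false]
    · exact hSpMeas _
    · exact (hSpMeas _).compl
  have hBsep : ∀ x y : X, x ≠ y → ∃ n, x ∈ B n ∧ y ∉ B n := by
    intro x y hxy
    by_contra h
    push_neg at h
    refine hxy (hSpSep x trivial y trivial fun n => ⟨fun hx => ?_, fun hy => ?_⟩)
    · have := h (2 * n)
      have he : Even (2 * n) := even_two_mul n
      have hdiv : 2 * n / 2 = n := by omega
      simp only [hBdef, he, if_true, hdiv] at this
      exact this hx
    · have := h (2 * n + 1)
      have he : ¬ Even (2 * n + 1) := by simp [Nat.even_add_one, Nat.even_mul]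
      have hdiv : (2 * n + 1) / 2 = n := by omega
      simp only [hBdef, he, if_false, hdiv, Set.mem_compl_iff] at this
      by_contra hx
      exact (this hx) hy
  set Aseq : ℕ → Set X := fun n => ⋂ i ∈ (Denumerable.ofNat (List ℕ) n).toFinset, B i
    with hAseqdef
  have hAseqMeas : ∀ n, MeasurableSet (Aseq n) :=
    fun n => Finset.measurableSet_biInter _ (fun i _ => hBmeas i)
  have cover : ∀ (x : X) (F : Finset X), x ∉ F →
      ∃ n, x ∈ Aseq n ∧ ∀ y ∈ F, y ∉ Aseq n := by
    intro x F hxF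
    have hall : ∀ y : X, ∃ i, x ∈ B i ∧ (x ≠ y → y ∉ B i) := by
      intro y
      by_cases hxy : x = y
      · by_cases h0 : x ∈ Sp 0
        · refine ⟨0, ?_, fun h => absurd hxy h⟩
          simp [hBdef, h0]
        · refine ⟨1, ?_, fun h => absurd hxy h⟩
          simp [hBdef, h0]
      · obtain ⟨i, hi1, hi2⟩ := hBsep x y hxy
        exact ⟨i, hi1, fun _ => hi2⟩
    choose φ hφ1 hφ2 using hall
    refine ⟨Encodable.encode (F.image φ).toList, ?_, ?_⟩
    · rw [hAseqdef]
      simp only [Denumerable.ofNat_encode, Finset.toList_toFinset, Set.mem_iInter]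
      rintro i hi
      obtain ⟨y, _, rfl⟩ := Finset.mem_image.1 hi
      exact hφ1 y
    · intro y hy hmem
      rw [hAseqdef] at hmem
      simp only [Denumerable.ofNat_encode, Finset.toList_toFinset, Set.mem_iInter] at hmem
      have hxy : x ≠ y := fun h => hxF (h ▸ hy)
      exact hφ2 y hxy (hmem (φ y) (Finset.mem_image_of_mem φ hy))
  -- the good sets and local diagonal functions
  set Good : ℕ → Set X := fun n => Aseq n \ EA (Aseq n) with hGooddef
  have hGoodMeas : ∀ n, MeasurableSet (Good n) :=
    fun n => (hAseqMeas n).diff (hEAmeas _ (hAseqMeas n))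
  set Good' : ℕ → Set X := fun n => Nat.casesOn n (⋃ m, Good m)ᶜ Good with hGood'def
  have hGood'Meas : ∀ n, MeasurableSet (Good' n) := by
    intro n
    cases n with
    | zero => exact (MeasurableSet.iUnion fun m => hGoodMeas m).compl
    | succ m => exact hGoodMeas m
  have htot : ∀ x : X, ∃ n, x ∈ Good' n := by
    intro x
    by_cases h : ∃ m, x ∈ Good m
    · obtain ⟨m, hm⟩ := h
      exact ⟨m + 1, hm⟩
    · refine ⟨0, ?_⟩
      show x ∈ (⋃ m, Good m)ᶜ
      simp only [Set.mem_compl_iff, Set.mem_iUnion]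
      exact h
  set g' : ℕ → X → ℂ := fun n => Nat.casesOn n (fun _ => 0)
    (fun m => ⇑(T (indicatorConstLp 2 (hAseqMeas m) (measure_ne_top μ _) (1 : ℂ)))) with hg'def
  have hg'Meas : ∀ n, Measurable (g' n) := by
    intro n
    cases n with
    | zero => exact measurable_const
    | succ m => exact (Lp.stronglyMeasurable _).measurable
  set f₀ : X → ℂ := fun x => g' (Nat.find (htot x)) x with hf₀def
  have hf₀meas : Measurable f₀ :=
    Measurable.find (p := fun n x => x ∈ Good' n) hg'Meas (fun n => hGood'Meas n) htot
  set C : ℝ := ‖T‖ + 1 with hCdef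
  have hC0 : (0 : ℝ) ≤ C := by positivity
  set f : X → ℂ := fun x => if ‖f₀ x‖ ≤ C then f₀ x else 0 with hfdef
  have hfmeas : Measurable f :=
    Measurable.ite (measurableSet_le hf₀meas.norm measurable_const) hf₀meas measurable_const
  have hfbound : ∀ x, ‖f x‖ ≤ C := by
    intro x
    have hfx : f x = if ‖f₀ x‖ ≤ C then f₀ x else 0 := rfl
    rw [hfx]
    by_cases h : ‖f₀ x‖ ≤ C
    · rw [if_pos h]
      exact h
    · rw [if_neg h]
      simpa using hC0
  -- the exceptional sets are null
  have hZ : ∀ m : ℕ, μ (Good m ∩ {x | C < ‖g' (m + 1) x‖}) = 0 := by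
    intro m
    set Z : Set X := Good m ∩ {x | C < ‖g' (m + 1) x‖} with hZdef
    have hZmeas : MeasurableSet Z :=
      (hGoodMeas m).inter (measurableSet_lt measurable_const (hg'Meas (m + 1)).norm)
    have hZA : Z ⊆ Aseq m := fun x hx => hx.1.1
    have hZE : ∀ x ∈ Z, x ∉ EA (Aseq m) := fun x hx => hx.1.2
    set ξZ := indicatorConstLp 2 hZmeas (measure_ne_top μ Z) (1 : ℂ) with hξZdef
    have h1 := key (Aseq m) Z (hAseqMeas m) hZmeas hZA
    have hlow : ∀ᵐ x ∂μ,
        ‖(indicatorConstLp 2 hZmeas (measure_ne_top μ Z) ((C : ℂ)) : X → ℂ) x‖ ≤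
          ‖(T ξZ : X → ℂ) x‖ := by
      filter_upwards [h1, indicatorConstLp_coeFn (p := 2) (hs := hZmeas)
        (hμs := measure_ne_top μ Z) (c := ((C : ℂ)))] with x hx1 hx2
      by_cases hxZ : x ∈ Z
      · have hxE := hZE x hxZ
        have := hx1 hxE
        rw [hx2, Set.indicator_of_mem hxZ, this, Set.indicator_of_mem hxZ, one_mul]
        have hCx : C < ‖g' (m + 1) x‖ := hxZ.2
        calc ‖(C : ℂ)‖ = C := by
              rw [Complex.norm_real, Real.norm_eq_abs, abs_of_nonneg hC0]
          _ ≤ ‖g' (m + 1) x‖ := le_of_lt hCx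
          _ = _ := rfl
      · rw [hx2, Set.indicator_of_notMem hxZ]
        simp
    have hnorm1 : ‖(indicatorConstLp 2 hZmeas (measure_ne_top μ Z) ((C : ℂ)) : Lp ℂ 2 μ)‖ ≤
        ‖T ξZ‖ := Lp.norm_le_norm_of_ae_le hlow
    have hnorm2 : ‖T ξZ‖ ≤ ‖T‖ * ‖ξZ‖ := T.le_opNorm ξZ
    have he1 : ‖(indicatorConstLp 2 hZmeas (measure_ne_top μ Z) ((C : ℂ)) : Lp ℂ 2 μ)‖ =
        C * (μ Z).toReal ^ (1 / (2 : ℝ)) := by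
      rw [norm_indicatorConstLp (by norm_num) (by norm_num), Complex.norm_real,
        Real.norm_eq_abs, abs_of_nonneg hC0, measureReal_def]
      norm_num
    have he2 : ‖ξZ‖ = (μ Z).toReal ^ (1 / (2 : ℝ)) := by
      rw [hξZdef, norm_indicatorConstLp (by norm_num) (by norm_num), measureReal_def]
      norm_num
    set a : ℝ := (μ Z).toReal ^ (1 / (2 : ℝ)) with hadef
    have ha0 : 0 ≤ a := Real.rpow_nonneg ENNReal.toReal_nonneg _
    have hCa : C * a ≤ ‖T‖ * a := by
      rw [← he1, ← he2]
      exact hnorm1.trans (hnorm2.trans (by rw [he2]))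
    have ha : a = 0 := by nlinarith [hCa, hC0, ha0]
    have : (μ Z).toReal = 0 := by
      rw [hadef] at ha
      exact (Real.rpow_eq_zero ENNReal.toReal_nonneg (by norm_num)).1 ha
    exact (ENNReal.toReal_eq_zero_iff _).1 this |>.resolve_right (measure_ne_top μ Z)
  have hf₀f : f₀ =ᵐ[μ] f := by
    have hsub : {x | ¬ f₀ x = f x} ⊆ ⋃ m, Good m ∩ {x | C < ‖g' (m + 1) x‖} := by
      intro x hx
      have hgt : C < ‖f₀ x‖ := by
        by_contra h
        push_neg at h
        refine hx ?_
        show f₀ x = if ‖f₀ x‖ ≤ C then f₀ x else 0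
        rw [if_pos h]
      have hspec := Nat.find_spec (htot x)
      have hfx : f₀ x = g' (Nat.find (htot x)) x := rfl
      rcases hfind : Nat.find (htot x) with _ | m
      · rw [hfind] at hfx
        have h0 : f₀ x = 0 := hfx
        rw [h0, norm_zero] at hgt
        exact absurd hgt (not_lt.2 hC0)
      · rw [hfind] at hspec hfx
        have hGm : x ∈ Good m := hspec
        refine Set.mem_iUnion.2 ⟨m, hGm, ?_⟩
        rw [Set.mem_setOf_eq, ← hfx]
        exact hgt
    have : μ {x | ¬ f₀ x = f x} = 0 :=
      measure_mono_null hsub (measure_iUnion_null hZ)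
    exact this
  -- diagonal identification
  have hdiag : ∀ (A : Set X) (hA : MeasurableSet A), ∀ᵐ x ∂μ,
      (x ∈ A ∧ x ∉ EA A) →
        (T (indicatorConstLp 2 hA (measure_ne_top μ A) (1 : ℂ)) : X → ℂ) x = f₀ x := by
    intro A hA
    have c1 : ∀ᵐ x ∂μ, ∀ m : ℕ, x ∉ EA (Aseq m) →
        (T (indicatorConstLp 2 ((hAseqMeas m).inter hA) (measure_ne_top μ _) (1 : ℂ)) :
          X → ℂ) x = (Aseq m ∩ A).indicator (fun _ => (1 : ℂ)) x *
          (T (indicatorConstLp 2 (hAseqMeas m) (measure_ne_top μ _) (1 : ℂ)) : X → ℂ) x :=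
      ae_all_iff.2 fun m =>
        key (Aseq m) (Aseq m ∩ A) (hAseqMeas m) ((hAseqMeas m).inter hA)
          Set.inter_subset_left
    have c2 : ∀ᵐ x ∂μ, ∀ m : ℕ, x ∉ EA A →
        (T (indicatorConstLp 2 ((hAseqMeas m).inter hA) (measure_ne_top μ _) (1 : ℂ)) :
          X → ℂ) x = (Aseq m ∩ A).indicator (fun _ => (1 : ℂ)) x *
          (T (indicatorConstLp 2 hA (measure_ne_top μ A) (1 : ℂ)) : X → ℂ) x :=
      ae_all_iff.2 fun m =>
        key A (Aseq m ∩ A) hA ((hAseqMeas m).inter hA) Set.inter_subset_right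
    filter_upwards [c1, c2] with x h1 h2 hx
    obtain ⟨hxA, hxEA⟩ := hx
    -- x belongs to some Good k
    have hGoodx : ∃ k, x ∈ Good k := by
      set F : Finset X := (S.erase 1).image (fun γ => γ⁻¹ • x) with hFdef
      have hxF : x ∉ F := by
        intro hxF
        obtain ⟨γ, hγ, hγx⟩ := Finset.mem_image.1 hxF
        have : x = γ • x := by
          conv_lhs => rw [← smul_inv_smul γ x]
          rw [hγx]
        exact hxEA ⟨γ, hγ, x, hxA, this⟩
      obtain ⟨n, hn1, hn2⟩ := cover x F hxF
      refine ⟨n, hn1, ?_⟩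
      rintro ⟨s, hs, a, ha, rfl⟩
      have : a = s⁻¹ • (s • a) := (inv_smul_smul s a).symm
      have haF : a ∈ F := by
        rw [hFdef]
        exact Finset.mem_image.2 ⟨s, hs, this.symm⟩
      exact hn2 a haF ha
    have hspec := Nat.find_spec (htot x)
    have hfx : f₀ x = g' (Nat.find (htot x)) x := rfl
    rcases hfind : Nat.find (htot x) with _ | k
    · exfalso
      rw [hfind] at hspec
      have h0 : x ∈ (⋃ m, Good m)ᶜ := hspec
      exact h0 (Set.mem_iUnion.2 hGoodx)
    · rw [hfind] at hspec hfx
      have hGk : x ∈ Good k := hspec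
      have hxAk : x ∈ Aseq k := hGk.1
      have hxEAk : x ∉ EA (Aseq k) := hGk.2
      have hxInt : x ∈ Aseq k ∩ A := ⟨hxAk, hxA⟩
      have e1 := h1 k hxEAk
      have e2 := h2 k hxEA
      rw [Set.indicator_of_mem hxInt, one_mul] at e1 e2
      rw [hfx]
      exact e2.symm.trans e1
  -- conclusion
  refine ⟨f, hfmeas, ⟨C, hfbound⟩, ?_⟩
  intro A hA η hsupp
  set gA : X → ℂ := A.indicator (fun _ => (1 : ℂ)) with hgAdef
  have hgAmeas : Measurable gA := measurable_const.indicator hA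
  have hgAb : ∀ x, ‖gA x‖ ≤ 1 := by
    intro x
    rw [hgAdef]
    by_cases h : x ∈ A <;> simp [Set.indicator_apply, h]
  set g1 : X → ℂ := (EA A)ᶜ.indicator (fun _ => (1 : ℂ)) with hg1def
  have hg1meas : Measurable g1 := measurable_const.indicator (hEAmeas A hA).compl
  have hg1b : ∀ x, ‖g1 x‖ ≤ 1 := by
    intro x
    rw [hg1def]
    by_cases h : x ∈ (EA A)ᶜ <;> simp [Set.indicator_apply, h]
  set gF : X → ℂ := fun x => g1 x * (f x * gA x) with hgFdef
  have hgFmeas : Measurable gF := hg1meas.mul (hfmeas.mul hgAmeas)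
  have hgFb : ∀ x, ‖gF x‖ ≤ C := by
    intro x
    rw [hgFdef]
    calc ‖g1 x * (f x * gA x)‖ = ‖g1 x‖ * (‖f x‖ * ‖gA x‖) := by
          rw [norm_mul, norm_mul]
      _ ≤ 1 * (C * 1) := by
          refine mul_le_mul (hg1b x) ?_ (by positivity) zero_le_one
          exact mul_le_mul (hfbound x) (hgAb x) (norm_nonneg _) hC0
      _ = C := by ring
  set M1 := mulCLM gA hgAmeas hgAb with hM1def
  set MG := mulCLM g1 hg1meas hg1b with hMGdef
  set MF := mulCLM gF hgFmeas hgFb with hMFdef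
  have h2ne0 : (2 : ℝ≥0∞) ≠ 0 := by norm_num
  have h2netop : (2 : ℝ≥0∞) ≠ ∞ := by norm_num
  have hdense : Dense ((Submodule.span ℂ
      (Set.range ((↑) : Lp.simpleFunc ℂ 2 μ → Lp ℂ 2 μ)) : Submodule ℂ (Lp ℂ 2 μ)) :
      Set (Lp ℂ 2 μ)) :=
    Dense.mono Submodule.subset_span (Lp.simpleFunc.denseRange h2netop)
  have hR : MG.comp (T.comp M1) = MF := by
    refine ContinuousLinearMap.ext_on hdense ?_
    rintro _ ⟨s, rfl⟩
    induction s using MeasureTheory.Lp.simpleFunc.induction (hp_pos := h2ne0)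
        (hp_ne_top := h2netop) with
    | indicatorConst c hs hμs =>
      rename_i B₀
      rw [Lp.simpleFunc.coe_indicatorConst]
      set ξc := indicatorConstLp 2 hs hμs.ne c with hξcdef
      set ξ' := indicatorConstLp 2 (hA.inter hs) (measure_ne_top μ _) (1 : ℂ) with hξ'def
      have hM1ξ : M1 ξc = c • ξ' := by
        apply Lp.ext
        have e1 : ⇑(M1 ξc) =ᵐ[μ] fun x => gA x * ξc x := coeFn_mulCLM gA hgAmeas hgAb ξc
        have e2 : ⇑ξc =ᵐ[μ] B₀.indicator fun _ => c := indicatorConstLp_coeFn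
        have e3 : ⇑(c • ξ') =ᵐ[μ] c • ⇑ξ' := Lp.coeFn_smul c ξ'
        have e4 : ⇑ξ' =ᵐ[μ] (A ∩ B₀).indicator fun _ => (1 : ℂ) := indicatorConstLp_coeFn
        filter_upwards [e1, e2, e3, e4] with x h1 h2 h3 h4
        rw [h1, h2, h3, Pi.smul_apply, h4, smul_eq_mul]
        have hgAx : gA x = A.indicator (fun _ => (1:ℂ)) x := rfl
        rw [hgAx]
        by_cases hxA : x ∈ A <;> by_cases hxB : x ∈ B₀ <;>
          simp [Set.indicator_apply, hxA, hxB]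
      have hL : (MG.comp (T.comp M1)) ξc = c • MG (T ξ') := by
        rw [ContinuousLinearMap.comp_apply, ContinuousLinearMap.comp_apply, hM1ξ,
          _root_.map_smul, _root_.map_smul]
      rw [hL]
      apply Lp.ext
      have e1 : ⇑(c • MG (T ξ')) =ᵐ[μ] c • ⇑(MG (T ξ')) := Lp.coeFn_smul c _
      have e2 : ⇑(MG (T ξ')) =ᵐ[μ] fun x => g1 x * (T ξ' : X → ℂ) x :=
        coeFn_mulCLM g1 hg1meas hg1b (T ξ')
      have e3 : ⇑(MF ξc) =ᵐ[μ] fun x => gF x * ξc x := coeFn_mulCLM gF hgFmeas hgFb ξc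
      have e4 : ⇑ξc =ᵐ[μ] B₀.indicator fun _ => c := indicatorConstLp_coeFn
      have e5 := key A (A ∩ B₀) hA (hA.inter hs) Set.inter_subset_left
      have e6 := hdiag A hA
      filter_upwards [e1, e2, e3, e4, e5, e6, hf₀f] with x h1 h2 h3 h4 h5 h6 h7
      rw [h1, Pi.smul_apply, h2, h3, h4, smul_eq_mul]
      have hgFx : gF x = g1 x * (f x * gA x) := rfl
      have hg1x' : g1 x = ((EA A)ᶜ).indicator (fun _ => (1:ℂ)) x := rfl
      have hgAx : gA x = A.indicator (fun _ => (1:ℂ)) x := rfl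
      by_cases hE : x ∈ EA A
      · have hg1x : g1 x = 0 := by
          rw [hg1x', Set.indicator_of_notMem (by simpa using hE)]
        rw [hgFx, hg1x]
        ring
      · have hg1x : g1 x = 1 := by
          rw [hg1x', Set.indicator_of_mem (by simpa using hE)]
        have hTξ' := h5 hE
        by_cases hxAB : x ∈ A ∩ B₀
        · have hTA : (T (indicatorConstLp 2 hA (measure_ne_top μ A) (1 : ℂ)) : X → ℂ) x
              = f₀ x := h6 ⟨hxAB.1, hE⟩
          rw [hTξ', Set.indicator_of_mem hxAB, hTA, h7, hgFx, hg1x, hgAx,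
            Set.indicator_of_mem hxAB.1, Set.indicator_of_mem hxAB.2]
          ring
        · rw [hTξ', Set.indicator_of_notMem hxAB, hgFx, hg1x, hgAx]
          by_cases hxA : x ∈ A
          · have hxB : x ∉ B₀ := fun h => hxAB ⟨hxA, h⟩
            rw [Set.indicator_of_notMem hxB, Set.indicator_of_mem hxA]
            ring
          · rw [Set.indicator_of_notMem hxA]
            ring
    | add hf' hg' hdisj ih1 ih2 =>
      rename_i fs gs
      rw [AddSubgroup.coe_add, map_add, map_add, ih1, ih2]
  have hM1η : M1 η = η := by
    apply Lp.ext
    have e1 : ⇑(M1 η) =ᵐ[μ] fun x => gA x * η x := coeFn_mulCLM gA hgAmeas hgAb η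
    filter_upwards [e1, hsupp] with x h1 h2
    have hgAx : gA x = A.indicator (fun _ => (1:ℂ)) x := rfl
    rw [h1, hgAx]
    by_cases hxA : x ∈ A
    · rw [Set.indicator_of_mem hxA, one_mul]
    · rw [Set.indicator_of_notMem hxA, zero_mul, h2 hxA]
  have hRη : MG (T η) = MF η := by
    have := congrArg (fun Φ : Lp ℂ 2 μ →L[ℂ] Lp ℂ 2 μ => Φ η) hR
    simpa only [ContinuousLinearMap.comp_apply, hM1η] using this
  have hcoe : ⇑(MG (T η)) =ᵐ[μ] ⇑(MF η) := by rw [hRη]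
  have e1 : ⇑(MG (T η)) =ᵐ[μ] fun x => g1 x * (T η : X → ℂ) x :=
    coeFn_mulCLM g1 hg1meas hg1b (T η)
  have e2 : ⇑(MF η) =ᵐ[μ] fun x => gF x * (η : X → ℂ) x := coeFn_mulCLM gF hgFmeas hgFb η
  filter_upwards [hcoe, e1, e2, hsupp] with x h1 h2 h3 h4 hnot
  have hE : x ∉ EA A := hnot
  have hg1x' : g1 x = ((EA A)ᶜ).indicator (fun _ => (1:ℂ)) x := rfl
  have hg1x : g1 x = 1 := by
    rw [hg1x', Set.indicator_of_mem (by simpa using hE)]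
  have hgFx : gF x = g1 x * (f x * gA x) := rfl
  have hgAx : gA x = A.indicator (fun _ => (1:ℂ)) x := rfl
  have hkey : (T η : X → ℂ) x = gF x * (η : X → ℂ) x := by
    have h5 : g1 x * (T η : X → ℂ) x = gF x * (η : X → ℂ) x := by
      rw [← h2, h1, h3]
    rwa [hg1x, one_mul] at h5
  rw [hkey, hgFx, hg1x, hgAx]
  by_cases hxA : x ∈ A
  · rw [Set.indicator_of_mem hxA]
    ring
  · rw [h4 hxA]
    ring
end

section
/- Let X be a standard Borel space with a σ-finite Borel measure μ and let g : X → X be a measurable map such that g(x) ≠ x for μ-almost every x. Then there exists a countable family of measurable sets U_n ⊆ X such that the sets U_n ∖ g⁻¹(U_n) cover X up to a set of μ-measure zero. -/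
/-!
A standard Borel space has a countable family of measurable sets separating points. Closing it
under complements, any two distinct points `x ≠ y` are separated one-sidedly: some set of the
family contains `x` but not `y`. Taking `y = g x` for the almost every `x` that is not fixed
gives the cover.
-/

open MeasureTheory

theorem MeasurableSpace.exists_seq_measurableSet_mem_notMem_of_ne {X : Type*}
    [MeasurableSpace X] [CountablySeparated X] :
    ∃ U : ℕ → Set X, (∀ n, MeasurableSet (U n)) ∧ ∀ ⦃x y⦄, x ≠ y → ∃ n, x ∈ U n ∧ y ∉ U n := by
  obtain ⟨S, hSm, hS⟩ := exists_seq_separating X MeasurableSet.empty Set.univ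
  let V : ℕ ⊕ ℕ → Set X := Sum.elim S fun n ↦ (S n)ᶜ
  have hVm : ∀ i, MeasurableSet (V i)
    | .inl k => hSm k
    | .inr k => (hSm k).compl
  refine ⟨V ∘ Equiv.natSumNatEquivNat.symm, fun n ↦ hVm _, fun x y hxy ↦ ?_⟩
  obtain ⟨k, hk⟩ : ∃ k, ¬(x ∈ S k ↔ y ∈ S k) := by
    by_contra! h
    exact hxy (hS x trivial y trivial h)
  by_cases hx : x ∈ S k
  · exact ⟨Equiv.natSumNatEquivNat (.inl k), by simp_all [V]⟩
  · exact ⟨Equiv.natSumNatEquivNat (.inr k), by simp_all [V]⟩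

theorem stmt6_general {X : Type*} [MeasurableSpace X] [StandardBorelSpace X]
    (μ : Measure X) (g : X → X)
    (hfix : ∀ᵐ x ∂μ, g x ≠ x) :
    ∃ U : ℕ → Set X, (∀ n, MeasurableSet (U n)) ∧
      ∀ᵐ x ∂μ, ∃ n, x ∈ U n \ g ⁻¹' (U n) := by
  obtain ⟨U, hUm, hU⟩ := MeasurableSpace.exists_seq_measurableSet_mem_notMem_of_ne (X := X)
  exact ⟨U, hUm, hfix.mono fun x hx ↦ hU hx.symm⟩

/-- If `X` is a standard Borel space with a σ-finite Borel measure `μ` and `g : X → X` is a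
measurable map with `g(x) ≠ x` for μ-a.e. `x`, then there is a countable family of measurable
sets `U n ⊆ X` such that the sets `U n ∖ g⁻¹(U n)` cover `X` up to a μ-null set. -/
theorem stmt6 {X : Type*} [MeasurableSpace X] [StandardBorelSpace X]
    (μ : Measure X) [SigmaFinite μ] (g : X → X) (hg : Measurable g)
    (hfix : ∀ᵐ x ∂μ, g x ≠ x) :
    ∃ U : ℕ → Set X, (∀ n, MeasurableSet (U n)) ∧
      ∀ᵐ x ∂μ, ∃ n, x ∈ U n \ g ⁻¹' (U n) :=
  stmt6_general μ g hfix
end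

section
/- If the non-singular action Γ ↷ (X,μ) of a countable group is essentially free, then the natural *-homomorphism Φ from the algebraic crossed product L^∞(X) ⋊_alg Γ to B(L²X), given by Φ(f,γ) = M_f π(γ), is injective. -/
/-!
Apply the vanishing operator `∑ γ ∈ S, M_{f γ} π(γ)` to indicators `1_t` of finite-measure sets:
for a.e. `x`, `∑ γ ∈ S, f γ x * √(d(γ_*μ)/dμ)(x) * 1_t(γ⁻¹ x) = 0` simultaneously for all `t` in a
countable family. Since `X` is standard Borel, this family can be chosen to contain, for any point
and finitely many other points, a set containing the first and missing the others. By essential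
freeness the points `γ⁻¹ x`, `γ ∈ S`, are a.e. distinct, so every term of the sum can be isolated,
and since the Radon–Nikodym factor is a.e. positive, each `f γ x` vanishes.
-/

open MeasureTheory Set

def SeparatesPointsFromFinsets {X : Type*} (𝒮 : Set (Set X)) : Prop :=
  ∀ (x : X) (F : Finset X), x ∉ F → ∃ s ∈ 𝒮, x ∈ s ∧ ∀ y ∈ F, y ∉ s

theorem exists_countable_measurableSet_separatesPointsFromFinsets (X : Type*)
    [MeasurableSpace X] [HasCountableSeparatingOn X MeasurableSet univ] :
    ∃ 𝒮 : Set (Set X), 𝒮.Countable ∧ (∀ s ∈ 𝒮, MeasurableSet s) ∧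
      SeparatesPointsFromFinsets 𝒮 := by
  obtain ⟨𝒜, h𝒜c, h𝒜m, h𝒜sep⟩ := exists_countable_separating X MeasurableSet univ
  have hsep : ∀ x y : X, x ≠ y → ∃ a ∈ 𝒜 ∪ compl '' 𝒜, x ∈ a ∧ y ∉ a := by
    intro x y hxy
    obtain ⟨s, hs, hxys⟩ : ∃ s ∈ 𝒜, ¬(x ∈ s ↔ y ∈ s) := by
      by_contra! h
      exact hxy (h𝒜sep x trivial y trivial h)
    by_cases hxs : x ∈ s
    · exact ⟨s, .inl hs, hxs, fun hys => hxys (iff_of_true hxs hys)⟩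
    · exact ⟨sᶜ, .inr ⟨s, hs, rfl⟩, hxs, fun hys => hxys (iff_of_false hxs hys)⟩
  refine ⟨sInter '' {s | s.Finite ∧ s ⊆ 𝒜 ∪ compl '' 𝒜},
    (countable_ofPred_finite_subset (h𝒜c.union (h𝒜c.image _))).image _, ?_, ?_⟩
  · rintro _ ⟨s, ⟨hsf, hs𝒜⟩, rfl⟩
    refine .sInter hsf.countable fun a ha => ?_
    rcases hs𝒜 ha with ha | ⟨b, hb, rfl⟩
    exacts [h𝒜m a ha, (h𝒜m b hb).compl]
  · classical
    intro x F hxF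
    induction F using Finset.induction_on with
    | empty => exact ⟨⋂₀ ∅, ⟨∅, ⟨finite_empty, empty_subset _⟩, rfl⟩, by simp, by simp⟩
    | insert y F _ ih =>
      rw [Finset.mem_insert, not_or] at hxF
      obtain ⟨_, ⟨s, ⟨hsf, hs𝒜⟩, rfl⟩, hxs, hFs⟩ := ih hxF.2
      obtain ⟨a, ha, hxa, hya⟩ := hsep x y hxF.1
      refine ⟨⋂₀ insert a s, ⟨_, ⟨hsf.insert a, insert_subset ha hs𝒜⟩, rfl⟩, ?_, ?_⟩
      · rw [sInter_insert]
        exact ⟨hxa, hxs⟩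
      · intro z hz
        rw [sInter_insert]
        rcases Finset.mem_insert.1 hz with rfl | hz
        exacts [fun h => hya h.1, fun h => hFs z hz h.2]

theorem exists_countable_finite_measure_separatesPointsFromFinsets {X : Type*}
    [MeasurableSpace X] [HasCountableSeparatingOn X MeasurableSet univ]
    (μ : Measure X) [SigmaFinite μ] :
    ∃ 𝒯 : Set (Set X), 𝒯.Countable ∧ (∀ t ∈ 𝒯, MeasurableSet t ∧ μ t ≠ ⊤) ∧
      SeparatesPointsFromFinsets 𝒯 := by
  obtain ⟨𝒮, h𝒮c, h𝒮m, h𝒮sep⟩ := exists_countable_measurableSet_separatesPointsFromFinsets X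
  refine ⟨image2 (· ∩ ·) 𝒮 (range (spanningSets μ)), h𝒮c.image2 (countable_range _) _, ?_, ?_⟩
  · rintro _ ⟨s, hs, _, ⟨n, rfl⟩, rfl⟩
    exact ⟨(h𝒮m s hs).inter (measurableSet_spanningSets μ n),
      (measure_inter_lt_top_of_right_ne_top (measure_spanningSets_lt_top μ n).ne).ne⟩
  · intro x F hxF
    obtain ⟨s, hs, hxs, hFs⟩ := h𝒮sep x F hxF
    exact ⟨s ∩ spanningSets μ (spanningSetsIndex μ x), mem_image2_of_mem hs (mem_range_self _),
      ⟨hxs, mem_spanningSetsIndex μ x⟩, fun y hy h => hFs y hy h.1⟩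

theorem eq_zero_of_forall_sum_mul_indicator_eq_zero {ι Y R : Type*} [Semiring R]
    {S : Finset ι} {z : ι → Y} (hz : InjOn z S) {𝒯 : Set (Set Y)}
    (h𝒯 : SeparatesPointsFromFinsets 𝒯) {c : ι → R}
    (h : ∀ t ∈ 𝒯, ∑ i ∈ S, c i * t.indicator 1 (z i) = 0) {i : ι} (hi : i ∈ S) :
    c i = 0 := by
  classical
  obtain ⟨t, ht, hit, hFt⟩ := h𝒯 (z i) ((S.erase i).image z) <| by
    simp only [Finset.mem_image, Finset.mem_erase, not_exists, not_and]
    exact fun j ⟨hji, hj⟩ hzj => hji (hz hj hi hzj)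
  rw [← h t ht, Finset.sum_eq_single i _ fun h => (h hi).elim, indicator_of_mem hit,
    Pi.one_apply, mul_one]
  intro j hj hji
  rw [indicator_of_notMem (hFt _ (Finset.mem_image_of_mem z (Finset.mem_erase.2 ⟨hji, hj⟩))),
    mul_zero]

theorem Measure.ae_toReal_rnDeriv_pos {α : Type*} [MeasurableSpace α] {μ ν : Measure α}
    [SigmaFinite μ] [SigmaFinite ν] (h : μ ≪ ν) : ∀ᵐ x ∂μ, 0 < (ν.rnDeriv μ x).toReal := by
  filter_upwards [Measure.rnDeriv_pos' h, Measure.rnDeriv_lt_top ν μ] with x hpos hfin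
  exact ENNReal.toReal_pos hpos.ne' hfin.ne

section Action

variable {X Γ : Type*} [MeasurableSpace X] [Group Γ] [MulAction Γ X] {μ : Measure X}

theorem ae_injective_smul_inv [Countable Γ] (hfree : ∀ γ : Γ, γ ≠ 1 → ∀ᵐ x ∂μ, γ • x ≠ x) :
    ∀ᵐ x ∂μ, Function.Injective fun γ : Γ => γ⁻¹ • x := by
  have hfree' : ∀ᵐ x ∂μ, ∀ γ : Γ, γ ≠ 1 → γ • x ≠ x :=
    ae_all_iff.2 fun γ => Filter.eventually_imp_distrib_left.2 (hfree γ)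
  filter_upwards [hfree'] with x hx γ γ' h
  by_contra hne
  refine hx (γ' * γ⁻¹) (fun h1 => hne (mul_inv_eq_one.1 h1).symm) ?_
  simp only [mul_smul]
  rw [show γ⁻¹ • x = γ'⁻¹ • x from h, smul_inv_smul]

theorem ae_sum_mul_indicator_smul_inv_eq_zero
    (hqmp : ∀ γ : Γ, Measure.QuasiMeasurePreserving (γ • ·) μ μ)
    {T : Γ → Lp ℂ 2 μ → Lp ℂ 2 μ} {w : Γ → X → ℝ}
    (hT : ∀ γ ξ, (T γ ξ : X → ℂ) =ᵐ[μ] fun x => w γ x • (ξ : X → ℂ) (γ⁻¹ • x))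
    {S : Finset Γ} {f : Γ → X → ℂ}
    (hker : ∀ ξ : Lp ℂ 2 μ, ∀ᵐ x ∂μ, ∑ γ ∈ S, f γ x * (T γ ξ : X → ℂ) x = 0)
    {t : Set X} (ht : MeasurableSet t) (hμt : μ t ≠ ⊤) :
    ∀ᵐ x ∂μ, ∑ γ ∈ S, f γ x * w γ x * t.indicator 1 (γ⁻¹ • x) = 0 := by
  set ξ := indicatorConstLp 2 ht hμt (1 : ℂ)
  have hξ : ∀ γ : Γ, ∀ᵐ x ∂μ, (ξ : X → ℂ) (γ⁻¹ • x) = t.indicator 1 (γ⁻¹ • x) := fun γ =>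
    (hqmp γ⁻¹).ae_eq indicatorConstLp_coeFn
  filter_upwards [hker ξ, (Filter.eventually_all_finset S).2 fun γ _ => hT γ ξ,
    (Filter.eventually_all_finset S).2 fun γ _ => hξ γ] with x hx hTx hξx
  rw [← hx]
  refine Finset.sum_congr rfl fun γ hγ => ?_
  rw [hTx γ hγ, hξx γ hγ, Complex.real_smul, mul_assoc]

end Action

theorem stmt7_general {X : Type*} [MeasurableSpace X] [StandardBorelSpace X]
    {Γ : Type*} [Group Γ] [Countable Γ] [MulAction Γ X]
    (μ : Measure X) [SigmaFinite μ]
    (hmeas : ∀ γ : Γ, Measurable fun x : X => γ • x)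
    (hns : ∀ γ : Γ, Measure.map (γ • ·) μ ≪ μ ∧ μ ≪ Measure.map (γ • ·) μ)
    (hfree : ∀ γ : Γ, γ ≠ 1 → ∀ᵐ x ∂μ, γ • x ≠ x)
    (π : Γ → (Lp ℂ 2 μ ≃ₗᵢ[ℂ] Lp ℂ 2 μ))
    (hπ : ∀ (γ : Γ) (ξ : Lp ℂ 2 μ),
      (π γ ξ : X → ℂ) =ᵐ[μ]
        fun x => (Real.sqrt (((Measure.map (γ • ·) μ).rnDeriv μ x).toReal)) •
          (ξ : X → ℂ) (γ⁻¹ • x))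
    (S : Finset Γ) (f : Γ → X → ℂ)
    (hker : ∀ ξ : Lp ℂ 2 μ, ∀ᵐ x ∂μ, ∑ γ ∈ S, f γ x * (π γ ξ : X → ℂ) x = 0) :
    ∀ γ ∈ S, f γ =ᵐ[μ] 0 := by
  have : MeasurableConstSMul Γ X := ⟨hmeas⟩
  obtain ⟨𝒯, h𝒯c, h𝒯m, h𝒯sep⟩ := exists_countable_finite_measure_separatesPointsFromFinsets μ
  have hsum := fun t ht => ae_sum_mul_indicator_smul_inv_eq_zero
    (fun γ => ⟨hmeas γ, (hns γ).1⟩) (T := fun γ => π γ) hπ hker (h𝒯m t ht).1 (h𝒯m t ht).2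
  have hpos : ∀ γ : Γ, ∀ᵐ x ∂μ, 0 < ((Measure.map (γ • ·) μ).rnDeriv μ x).toReal := fun γ =>
    have : SigmaFinite (Measure.map (γ • ·) μ) :=
      (MeasurableEquiv.smul γ).measurableEmbedding.sigmaFinite_map
    Measure.ae_toReal_rnDeriv_pos (hns γ).2
  intro γ hγ
  filter_upwards [(ae_ball_iff h𝒯c).2 hsum, ae_all_iff.2 hpos, ae_injective_smul_inv hfree]
    with x hx hD hinj
  have hc := eq_zero_of_forall_sum_mul_indicator_eq_zero hinj.injOn h𝒯sep hx hγ
  exact (mul_eq_zero.1 hc).resolve_right (Complex.ofReal_ne_zero.2 (Real.sqrt_pos.2 (hD γ)).ne')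

/-- If a non-singular action of a countable group `Γ` on `(X,μ)` is essentially free, then the
natural `*`-homomorphism `Φ : L^∞X ⋊_alg Γ → B(L²X)`, `Φ(f,γ) = M_f π(γ)`, is injective:
if a finite sum `Σ_{γ∈S} M_{f_γ} π(γ)` vanishes, then all coefficients `f_γ` vanish a.e. -/
theorem stmt7 {X : Type*} [MeasurableSpace X] [StandardBorelSpace X]
    {Γ : Type*} [Group Γ] [Countable Γ] [MulAction Γ X]
    (μ : Measure X) [SigmaFinite μ]
    (hmeas : ∀ γ : Γ, Measurable fun x : X => γ • x)
    (hns : ∀ γ : Γ, Measure.map (γ • ·) μ ≪ μ ∧ μ ≪ Measure.map (γ • ·) μ)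
    (hfree : ∀ γ : Γ, γ ≠ 1 → ∀ᵐ x ∂μ, γ • x ≠ x)
    (π : Γ → (Lp ℂ 2 μ ≃ₗᵢ[ℂ] Lp ℂ 2 μ))
    (hπ : ∀ (γ : Γ) (ξ : Lp ℂ 2 μ),
      (π γ ξ : X → ℂ) =ᵐ[μ]
        fun x => (Real.sqrt (((Measure.map (γ • ·) μ).rnDeriv μ x).toReal)) •
          (ξ : X → ℂ) (γ⁻¹ • x))
    (S : Finset Γ) (f : Γ → X → ℂ)
    (hf : ∀ γ, Measurable (f γ)) (hfb : ∀ γ, ∃ C : ℝ, ∀ x, ‖f γ x‖ ≤ C)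
    (hker : ∀ ξ : Lp ℂ 2 μ, ∀ᵐ x ∂μ, ∑ γ ∈ S, f γ x * (π γ ξ : X → ℂ) x = 0) :
    ∀ γ ∈ S, f γ =ᵐ[μ] 0 :=
  stmt7_general μ hmeas hns hfree π hπ S f hker
end

section
/- Let (Y,d) be a metric space, ℓ a proper length function on a countable group Γ with ℓ(γ) ≥ 1 for all γ ≠ e, and Γ ↷ Y an action. The warped metric δ_Γ, defined as the largest metric with δ_Γ ≤ d and δ_Γ(y, γ·y) ≤ ℓ(γ), is given by δ_Γ(x,y) = inf { Σ_{i=1}^n ℓ(γ_i) + Σ_{i=0}^n d(x_i, y_i) } where the infimum runs over chains with x₀ = x, y_n = y, and x_i = γ_i·y_{i−1}. -/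
open scoped BigOperators

/-- The set of costs of chains from `x` to `y`: a chain consists of points
`x = x₀, y₀, x₁, y₁, …, xₙ, yₙ = y` with `xᵢ = γᵢ • yᵢ₋₁`, and its cost is
`Σᵢ ℓ(γᵢ) + Σᵢ d(xᵢ, yᵢ)`. -/
def chainCosts {Y : Type*} [MetricSpace Y] {Γ : Type*} [Group Γ] [MulAction Γ Y]
    (ℓ : Γ → ℝ) (x y : Y) : Set ℝ :=
  {c | ∃ (n : ℕ) (xs ys : Fin (n + 1) → Y) (γs : Fin n → Γ),
    xs 0 = x ∧ ys (Fin.last n) = y ∧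
    (∀ i : Fin n, xs i.succ = γs i • ys i.castSucc) ∧
    c = (∑ i : Fin n, ℓ (γs i)) + ∑ i : Fin (n + 1), dist (xs i) (ys i)}

/-- The warped distance: the infimum of costs of chains. -/
noncomputable def warpedDist {Y : Type*} [MetricSpace Y] {Γ : Type*} [Group Γ]
    [MulAction Γ Y] (ℓ : Γ → ℝ) (x y : Y) : ℝ :=
  sInf (chainCosts ℓ x y)

namespace Stmt11Aux

variable {Y : Type*} [MetricSpace Y] {Γ : Type*} [Group Γ] [MulAction Γ Y]

/-- Cost of a list-encoded chain from `x` to `y`. -/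
def lcost (ℓ : Γ → ℝ) : Y → List (Γ × Y) → Y → ℝ
  | x, [], y => dist x y
  | x, (γ, w) :: L, y => dist x w + ℓ γ + lcost ℓ (γ • w) L y

theorem lcost_mem (ℓ : Γ → ℝ) (L : List (Γ × Y)) :
    ∀ x y : Y, lcost ℓ x L y ∈ chainCosts ℓ x y := by
  induction L with
  | nil =>
    intro x y
    exact ⟨0, ![x], ![y], ![], rfl, rfl, fun i => i.elim0, by simp [lcost]⟩
  | cons p L ih =>
    intro x y
    obtain ⟨γ, w⟩ := p
    obtain ⟨n, xs, ys, γs, h0, hlast, hchain, hcost⟩ := ih (γ • w) y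
    refine ⟨n + 1, Fin.cons x xs, Fin.cons w ys, Fin.cons γ γs, rfl, ?_, ?_, ?_⟩
    · rw [show Fin.last (n+1) = (Fin.last n).succ from rfl, Fin.cons_succ]; exact hlast
    · intro i
      refine Fin.cases ?_ ?_ i
      · simpa using h0
      · intro j
        have h1 : (Fin.cons x xs : Fin (n+2) → Y) (j.succ).succ = xs j.succ :=
          Fin.cons_succ _ _ _
        have h2 : (Fin.cons w ys : Fin (n+2) → Y) (j.succ).castSucc = ys j.castSucc := by
          rw [← Fin.succ_castSucc, Fin.cons_succ]
        rw [h1, h2, Fin.cons_succ]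
        exact hchain j
    · rw [lcost, hcost]
      simp only [Fin.sum_univ_succ, Fin.cons_zero, Fin.cons_succ]
      ring

theorem mem_lcost (ℓ : Γ → ℝ) :
    ∀ (n : ℕ) (xs ys : Fin (n + 1) → Y) (γs : Fin n → Γ),
    (∀ i : Fin n, xs i.succ = γs i • ys i.castSucc) →
    ∃ L : List (Γ × Y),
      (∑ i : Fin n, ℓ (γs i)) + ∑ i : Fin (n + 1), dist (xs i) (ys i)
        = lcost ℓ (xs 0) L (ys (Fin.last n)) := by
  intro n
  induction n with
  | zero =>
    intro xs ys γs _
    exact ⟨[], by simp [lcost, Fin.last]⟩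
  | succ n ih =>
    intro xs ys γs hchain
    obtain ⟨L, hL⟩ := ih (fun i => xs i.succ) (fun i => ys i.succ) (fun i => γs i.succ)
      (by
        intro i
        have := hchain i.succ
        rw [← Fin.succ_castSucc] at this
        exact this)
    refine ⟨(γs 0, ys 0) :: L, ?_⟩
    have h0 : γs 0 • ys (0 : Fin (n+2)) = xs (Fin.succ 0) := by
      have := hchain 0; simpa using this.symm
    have hlast : ys (Fin.last (n+1)) = ys (Fin.succ (Fin.last n)) := by
      rw [Fin.succ_last]
    rw [hlast, lcost, h0, ← hL, Fin.sum_univ_succ (f := fun i => ℓ (γs i)),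
      Fin.sum_univ_succ (f := fun i => dist (xs i) (ys i))]
    ring

theorem lcost_nonneg (ℓ : Γ → ℝ) (hℓ0 : ∀ γ : Γ, 0 ≤ ℓ γ) (L : List (Γ × Y)) :
    ∀ x y : Y, 0 ≤ lcost ℓ x L y := by
  induction L with
  | nil => intro x y; exact dist_nonneg
  | cons p L ih =>
    intro x y; obtain ⟨γ, w⟩ := p
    rw [lcost]
    have := ih (γ • w) y
    have := hℓ0 γ
    have := dist_nonneg (x := x) (y := w)
    linarith

theorem lcost_concat (ℓ : Γ → ℝ) (h1 : ℓ 1 = 0) (L₁ : List (Γ × Y)) :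
    ∀ (L₂ : List (Γ × Y)) (x y z : Y),
    lcost ℓ x (L₁ ++ (1, y) :: L₂) z = lcost ℓ x L₁ y + lcost ℓ y L₂ z := by
  induction L₁ with
  | nil => intro L₂ x y z; simp [lcost, h1]
  | cons p L ih =>
    intro L₂ x y z; obtain ⟨γ, w⟩ := p
    simp only [List.cons_append, lcost]
    rw [ih]
    ring

theorem lcost_snoc (ℓ : Γ → ℝ) (L : List (Γ × Y)) (g : Γ) (v : Y) :
    ∀ x y : Y, lcost ℓ x (L ++ [(g, v)]) y = lcost ℓ x L v + ℓ g + dist (g • v) y := by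
  induction L with
  | nil => intro x y; simp [lcost]
  | cons p L ih =>
    intro x y; obtain ⟨γ, w⟩ := p
    simp only [List.cons_append, lcost]
    rw [ih]
    ring

theorem lcost_rev (ℓ : Γ → ℝ) (hsymm : ∀ γ : Γ, ℓ γ⁻¹ = ℓ γ) (L : List (Γ × Y)) :
    ∀ x y : Y, ∃ M : List (Γ × Y), lcost ℓ y M x = lcost ℓ x L y := by
  induction L with
  | nil => intro x y; exact ⟨[], dist_comm y x⟩
  | cons p L ih =>
    intro x y; obtain ⟨γ, w⟩ := p
    obtain ⟨M, hM⟩ := ih (γ • w) y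
    refine ⟨M ++ [(γ⁻¹, γ • w)], ?_⟩
    rw [lcost_snoc, hM, hsymm, inv_smul_smul, lcost, dist_comm w x]
    ring

theorem lcost_lower (ℓ : Γ → ℝ) (δ : Y → Y → ℝ)
    (htri : ∀ x y z : Y, δ x z ≤ δ x y + δ y z)
    (hd : ∀ x y : Y, δ x y ≤ dist x y)
    (hγ : ∀ (y : Y) (γ : Γ), δ y (γ • y) ≤ ℓ γ) (L : List (Γ × Y)) :
    ∀ x y : Y, δ x y ≤ lcost ℓ x L y := by
  induction L with
  | nil => intro x y; exact hd x y
  | cons p L ih =>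
    intro x y; obtain ⟨γ, w⟩ := p
    rw [lcost]
    calc δ x y ≤ δ x w + δ w y := htri _ _ _
      _ ≤ δ x w + (δ w (γ • w) + δ (γ • w) y) := by linarith [htri w (γ • w) y]
      _ ≤ dist x w + ℓ γ + lcost ℓ (γ • w) L y := by
          linarith [hd x w, hγ w γ, ih (γ • w) y]

end Stmt11Aux


/-- The warped metric `δ_Γ`, the largest metric with `δ_Γ ≤ d` and `δ_Γ(y, γ·y) ≤ ℓ(γ)`,
is given by the chain-infimum formula: `warpedDist ℓ` is a metric satisfying both bounds,
and any metric `δ` satisfying both bounds satisfies `δ ≤ warpedDist ℓ` pointwise. -/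
theorem stmt11 {Y : Type*} [MetricSpace Y] {Γ : Type*} [Group Γ] [Countable Γ]
    [MulAction Γ Y] (ℓ : Γ → ℝ)
    (hsymm : ∀ γ : Γ, ℓ γ⁻¹ = ℓ γ)
    (hsub : ∀ γ₁ γ₂ : Γ, ℓ (γ₁ * γ₂) ≤ ℓ γ₁ + ℓ γ₂)
    (hzero : ∀ γ : Γ, ℓ γ = 0 ↔ γ = 1)
    (hone : ∀ γ : Γ, γ ≠ 1 → 1 ≤ ℓ γ)
    (hproper : ∀ r : ℝ, {γ : Γ | ℓ γ ≤ r}.Finite) :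
    (∀ x : Y, warpedDist ℓ x x = 0) ∧
    (∀ x y : Y, warpedDist ℓ x y = 0 → x = y) ∧
    (∀ x y : Y, warpedDist ℓ x y = warpedDist ℓ y x) ∧
    (∀ x y z : Y, warpedDist ℓ x z ≤ warpedDist ℓ x y + warpedDist ℓ y z) ∧
    (∀ x y : Y, warpedDist ℓ x y ≤ dist x y) ∧
    (∀ (y : Y) (γ : Γ), warpedDist ℓ y (γ • y) ≤ ℓ γ) ∧
    (∀ δ : Y → Y → ℝ,
      (∀ x, δ x x = 0) → (∀ x y, δ x y = 0 → x = y) →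
      (∀ x y, δ x y = δ y x) → (∀ x y z, δ x z ≤ δ x y + δ y z) →
      (∀ x y, δ x y ≤ dist x y) → (∀ (y : Y) (γ : Γ), δ y (γ • y) ≤ ℓ γ) →
      ∀ x y, δ x y ≤ warpedDist ℓ x y) := by
  classical
  have h1 : ℓ (1 : Γ) = 0 := (hzero 1).mpr rfl
  have hℓ0 : ∀ γ : Γ, 0 ≤ ℓ γ := by
    intro γ
    by_cases h : γ = 1
    · rw [h, h1]
    · linarith [hone γ h]
  have hmemL : ∀ (x y : Y) (c : ℝ), c ∈ chainCosts ℓ x y →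
      ∃ L, c = Stmt11Aux.lcost ℓ x L y := by
    rintro x y c ⟨n, xs, ys, γs, h0, hlast, hchain, rfl⟩
    obtain ⟨L, hL⟩ := Stmt11Aux.mem_lcost ℓ n xs ys γs hchain
    exact ⟨L, by rw [hL, h0, hlast]⟩
  have hLmem : ∀ (x y : Y) (L : List (Γ × Y)),
      Stmt11Aux.lcost ℓ x L y ∈ chainCosts ℓ x y :=
    fun x y L => Stmt11Aux.lcost_mem ℓ L x y
  have hne : ∀ x y : Y, (chainCosts ℓ x y).Nonempty := fun x y => ⟨_, hLmem x y []⟩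
  have hnn : ∀ (x y : Y) (c : ℝ), c ∈ chainCosts ℓ x y → 0 ≤ c := by
    intro x y c hc
    obtain ⟨L, rfl⟩ := hmemL x y c hc
    exact Stmt11Aux.lcost_nonneg ℓ hℓ0 L x y
  have hbdd : ∀ x y : Y, BddBelow (chainCosts ℓ x y) :=
    fun x y => ⟨0, fun c hc => hnn x y c hc⟩
  have hled : ∀ x y : Y, warpedDist ℓ x y ≤ dist x y := by
    intro x y
    have hm : dist x y ∈ chainCosts ℓ x y := by
      simpa [Stmt11Aux.lcost] using hLmem x y []
    exact csInf_le (hbdd x y) hm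
  have hmax : ∀ δ : Y → Y → ℝ, (∀ x y z, δ x z ≤ δ x y + δ y z) →
      (∀ x y, δ x y ≤ dist x y) → (∀ (y : Y) (γ : Γ), δ y (γ • y) ≤ ℓ γ) →
      ∀ x y, δ x y ≤ warpedDist ℓ x y := by
    intro δ htri hd hγ x y
    refine le_csInf (hne x y) ?_
    intro c hc
    obtain ⟨L, rfl⟩ := hmemL x y c hc
    exact Stmt11Aux.lcost_lower ℓ δ htri hd hγ L x y
  have hself : ∀ x : Y, warpedDist ℓ x x = 0 := by
    intro x
    refine le_antisymm ?_ (le_csInf (hne x x) (hnn x x))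
    simpa using hled x x
  have hact : ∀ (y : Y) (γ : Γ), warpedDist ℓ y (γ • y) ≤ ℓ γ := by
    intro y γ
    have hm := hLmem y (γ • y) [(γ, y)]
    have he : Stmt11Aux.lcost ℓ y [(γ, y)] (γ • y) = ℓ γ := by
      simp [Stmt11Aux.lcost]
    rw [he] at hm
    exact csInf_le (hbdd _ _) hm
  have hsymmW : ∀ x y : Y, warpedDist ℓ x y = warpedDist ℓ y x := by
    have key : ∀ x y : Y, warpedDist ℓ y x ≤ warpedDist ℓ x y := by
      intro x y
      refine le_csInf (hne x y) ?_
      intro c hc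
      obtain ⟨L, rfl⟩ := hmemL x y c hc
      obtain ⟨M, hM⟩ := Stmt11Aux.lcost_rev ℓ hsymm L x y
      rw [← hM]
      exact csInf_le (hbdd y x) (hLmem y x M)
    intro x y; exact le_antisymm (key y x) (key x y)
  have htriW : ∀ x y z : Y, warpedDist ℓ x z ≤ warpedDist ℓ x y + warpedDist ℓ y z := by
    intro x y z
    refine le_of_forall_pos_le_add ?_
    intro ε hε
    have hlt1 : sInf (chainCosts ℓ x y) < warpedDist ℓ x y + ε / 2 := by
      rw [warpedDist]; linarith
    have hlt2 : sInf (chainCosts ℓ y z) < warpedDist ℓ y z + ε / 2 := by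
      rw [warpedDist]; linarith
    obtain ⟨c₁, hc₁, hlt₁⟩ := exists_lt_of_csInf_lt (hne x y) hlt1
    obtain ⟨c₂, hc₂, hlt₂⟩ := exists_lt_of_csInf_lt (hne y z) hlt2
    obtain ⟨L₁, rfl⟩ := hmemL x y c₁ hc₁
    obtain ⟨L₂, rfl⟩ := hmemL y z c₂ hc₂
    have hmem : Stmt11Aux.lcost ℓ x L₁ y + Stmt11Aux.lcost ℓ y L₂ z ∈ chainCosts ℓ x z := by
      rw [← Stmt11Aux.lcost_concat ℓ h1 L₁ L₂ x y z]
      exact hLmem x z _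
    have hle := csInf_le (hbdd x z) hmem
    calc warpedDist ℓ x z ≤ _ := hle
      _ ≤ warpedDist ℓ x y + ε / 2 + (warpedDist ℓ y z + ε / 2) := by linarith
      _ = warpedDist ℓ x y + warpedDist ℓ y z + ε := by ring
  have hpos : ∀ x y : Y, warpedDist ℓ x y = 0 → x = y := by
    intro x y h
    set δ' : Y → Y → ℝ := fun a b => min (dist a b) 1 with hδ'
    have htri' : ∀ a b c : Y, δ' a c ≤ δ' a b + δ' b c := by
      intro a b c
      simp only [hδ']
      rcases le_or_gt 1 (dist a b) with hb | hb
      · have e1 : min (dist a b) 1 = 1 := min_eq_right hb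
        have h2 : (0:ℝ) ≤ min (dist b c) 1 := le_min dist_nonneg zero_le_one
        have h3 : min (dist a c) 1 ≤ 1 := min_le_right _ _
        linarith
      · rcases le_or_gt 1 (dist b c) with hc | hc
        · have e1 : min (dist b c) 1 = 1 := min_eq_right hc
          have h2 : (0:ℝ) ≤ min (dist a b) 1 := le_min dist_nonneg zero_le_one
          have h3 : min (dist a c) 1 ≤ 1 := min_le_right _ _
          linarith
        · rw [min_eq_left hb.le, min_eq_left hc.le]
          calc min (dist a c) 1 ≤ dist a c := min_le_left _ _
            _ ≤ dist a b + dist b c := dist_triangle _ _ _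
    have hd' : ∀ a b : Y, δ' a b ≤ dist a b := fun a b => min_le_left _ _
    have hγ' : ∀ (b : Y) (γ : Γ), δ' b (γ • b) ≤ ℓ γ := by
      intro b γ
      by_cases hγ1 : γ = 1
      · subst hγ1; simp [hδ', h1]
      · exact le_trans (min_le_right _ _) (hone γ hγ1)
    have hmin : min (dist x y) 1 ≤ 0 := by
      have := hmax δ' htri' hd' hγ' x y
      rw [h] at this
      exact this
    rcases le_total (dist x y) 1 with hcase | hcase
    · rw [min_eq_left hcase] at hmin
      exact dist_le_zero.mp hmin
    · rw [min_eq_right hcase] at hmin; linarith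
  exact ⟨hself, hpos, hsymmW, htriW, hled, hact,
    fun δ _ _ _ htriδ hdδ hγδ => hmax δ htriδ hdδ hγδ⟩
end

section
/- Let Γ ↷ (Y,d) be an action by Lipschitz maps and δ_Γ the associated warped metric. Then for every r > 0 there exists R > 0 such that for every subset A ⊆ Y, the δ_Γ-open r-neighbourhood of A is contained in B_Γ(r) · N_d(A; R), where B_Γ(r) is the set of group elements of length < r and N_d denotes the d-neighbourhood. -/
open scoped BigOperators

private lemma chain_key {Y : Type*} [MetricSpace Y] {Γ : Type*} [Group Γ]
    [MulAction Γ Y] (ℓ : Γ → ℝ)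
    (hsub : ∀ γ₁ γ₂ : Γ, ℓ (γ₁ * γ₂) ≤ ℓ γ₁ + ℓ γ₂)
    (hnn : ∀ γ : Γ, 0 ≤ ℓ γ) (hl1 : ℓ (1 : Γ) = 0)
    (L B : ℝ)
    (hL : ∀ γ : Γ, ℓ γ ≤ B → ∀ x y : Y, dist (γ • x) (γ • y) ≤ L * dist x y) :
    ∀ (n : ℕ) (xs ys : Fin (n + 1) → Y) (γs : Fin n → Γ),
      (∀ i : Fin n, xs i.succ = γs i • ys i.castSucc) →
      ∀ h : Γ, ℓ h + ∑ i, ℓ (γs i) ≤ B →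
      ∃ g : Γ, ℓ g ≤ ∑ i, ℓ (γs i) ∧
        dist ((h * g) • xs 0) (h • ys (Fin.last n)) ≤
          L * ∑ i : Fin (n + 1), dist (xs i) (ys i) := by
  intro n
  induction n with
  | zero =>
    intro xs ys γs hchain h hB
    refine ⟨1, by simp [hl1], ?_⟩
    have hB' : ℓ h ≤ B := by simpa using hB
    have := hL h hB' (xs 0) (ys 0)
    simpa [Fin.last, Fin.sum_univ_succ] using this
  | succ n ih =>
    intro xs ys γs hchain h hB
    set xs' : Fin (n + 1) → Y := fun i => xs i.castSucc with hxs'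
    set ys' : Fin (n + 1) → Y := fun i => ys i.castSucc with hys'
    set γs' : Fin n → Γ := fun i => γs i.castSucc with hγs'
    have hchain' : ∀ i : Fin n, xs' i.succ = γs' i • ys' i.castSucc := by
      intro i
      have := hchain i.castSucc
      show xs (i.succ.castSucc) = γs i.castSucc • ys i.castSucc.castSucc
      simpa only [Fin.succ_castSucc] using this
    set gl : Γ := γs (Fin.last n) with hgl
    have hsum : ∑ i, ℓ (γs i) = (∑ i, ℓ (γs' i)) + ℓ gl := by
      simpa [γs', gl] using Fin.sum_univ_castSucc (fun i => ℓ (γs i))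
    have hsnn : 0 ≤ ∑ i, ℓ (γs' i) := Finset.sum_nonneg fun i _ => hnn _
    have hB' : ℓ (h * gl) + ∑ i, ℓ (γs' i) ≤ B := by
      have := hsub h gl
      have h2 := hB
      rw [hsum] at h2
      linarith
    obtain ⟨g', hg'1, hg'2⟩ := ih xs' ys' γs' hchain' (h * gl) hB'
    refine ⟨gl * g', ?_, ?_⟩
    · have := hsub gl g'
      rw [hsum]; linarith
    · have hlast : xs (Fin.last (n + 1)) = gl • ys' (Fin.last n) := by
        have := hchain (Fin.last n)
        simpa [gl, ys', Fin.succ_last] using this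
      have hA : dist ((h * (gl * g')) • xs 0) (h • xs (Fin.last (n + 1))) ≤
          L * ∑ i : Fin (n + 1), dist (xs' i) (ys' i) := by
        have e1 : (h * (gl * g')) • xs 0 = ((h * gl) * g') • xs' 0 := by
          have : xs' 0 = xs 0 := by simp [xs']
          rw [this, mul_assoc]
        have e2 : h • xs (Fin.last (n + 1)) = (h * gl) • ys' (Fin.last n) := by
          rw [hlast, mul_smul]
        rw [e1, e2]
        exact hg'2
      have hBh : ℓ h ≤ B := by
        have : 0 ≤ ∑ i, ℓ (γs i) := Finset.sum_nonneg fun i _ => hnn _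
        linarith
      have hBterm := hL h hBh (xs (Fin.last (n + 1))) (ys (Fin.last (n + 1)))
      have htri := dist_triangle ((h * (gl * g')) • xs 0) (h • xs (Fin.last (n + 1)))
        (h • ys (Fin.last (n + 1)))
      have hsumd : ∑ i : Fin (n + 2), dist (xs i) (ys i) =
          (∑ i : Fin (n + 1), dist (xs' i) (ys' i)) +
            dist (xs (Fin.last (n + 1))) (ys (Fin.last (n + 1))) := by
        simpa [xs', ys'] using Fin.sum_univ_castSucc (fun i => dist (xs i) (ys i))
      rw [hsumd, mul_add]
      linarith


/-- For a Lipschitz action `Γ ↷ (Y,d)` with warped metric `δ_Γ`: for every `r > 0` there is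
`R > 0` such that for every `A ⊆ Y`, the `δ_Γ`-open `r`-neighbourhood of `A` is contained in
`B_Γ(r) · N_d(A; R)`. -/
theorem stmt12 {Y : Type*} [MetricSpace Y] {Γ : Type*} [Group Γ] [Countable Γ]
    [MulAction Γ Y] (ℓ : Γ → ℝ)
    (hsymm : ∀ γ : Γ, ℓ γ⁻¹ = ℓ γ)
    (hsub : ∀ γ₁ γ₂ : Γ, ℓ (γ₁ * γ₂) ≤ ℓ γ₁ + ℓ γ₂)
    (hzero : ∀ γ : Γ, ℓ γ = 0 ↔ γ = 1)
    (hone : ∀ γ : Γ, γ ≠ 1 → 1 ≤ ℓ γ)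
    (hproper : ∀ r : ℝ, {γ : Γ | ℓ γ ≤ r}.Finite)
    (hlip : ∀ γ : Γ, ∃ L : NNReal, LipschitzWith L fun y : Y => γ • y) :
    ∀ r : ℝ, 0 < r → ∃ R : ℝ, 0 < R ∧ ∀ A : Set Y,
      {y : Y | ∃ a ∈ A, warpedDist ℓ y a < r} ⊆
        ⋃ γ ∈ {γ : Γ | ℓ γ < r}, (fun y : Y => γ • y) '' {y : Y | ∃ a ∈ A, dist y a < R} := by
  intro r hr
  have hnn : ∀ γ : Γ, 0 ≤ ℓ γ := by
    intro γ
    by_cases h : γ = 1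
    · simp [h, (hzero 1).mpr rfl]
    · linarith [hone γ h]
  have hl1 : ℓ (1 : Γ) = 0 := (hzero 1).mpr rfl
  -- uniform Lipschitz constant on the finite ball of radius r
  classical
  set S : Finset Γ := (hproper r).toFinset with hS
  set L : ℝ := 1 + ∑ γ ∈ S, ((hlip γ).choose : ℝ) with hLdef
  have hL1 : 1 ≤ L := by
    have : (0:ℝ) ≤ ∑ γ ∈ S, ((hlip γ).choose : ℝ) :=
      Finset.sum_nonneg fun γ _ => NNReal.coe_nonneg _
    simp [hLdef]; linarith
  have hL : ∀ γ : Γ, ℓ γ ≤ r → ∀ x y : Y, dist (γ • x) (γ • y) ≤ L * dist x y := by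
    intro γ hγ x y
    have hmem : γ ∈ S := by simp [hS, Set.Finite.mem_toFinset]; exact hγ
    have h1 : dist (γ • x) (γ • y) ≤ ((hlip γ).choose : ℝ) * dist x y :=
      (hlip γ).choose_spec.dist_le_mul x y
    have h2 : ((hlip γ).choose : ℝ) ≤ L := by
      have := Finset.single_le_sum (f := fun γ : Γ => ((hlip γ).choose : ℝ))
        (fun i _ => NNReal.coe_nonneg _) hmem
      simp [hLdef]; linarith
    calc dist (γ • x) (γ • y) ≤ ((hlip γ).choose : ℝ) * dist x y := h1
      _ ≤ L * dist x y := by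
          exact mul_le_mul_of_nonneg_right h2 dist_nonneg
  have hLpos : 0 < L := lt_of_lt_of_le one_pos hL1
  refine ⟨L * r, mul_pos hLpos hr, ?_⟩
  intro A y hy
  obtain ⟨a, ha, hya⟩ := hy
  -- extract a chain of cost < r
  have hne : (chainCosts ℓ y a).Nonempty := by
    refine ⟨dist y a, 0, ![y], ![a], Fin.elim0, rfl, rfl, fun i => i.elim0, ?_⟩
    simp
  have hbdd : BddBelow (chainCosts ℓ y a) := by
    refine ⟨0, fun c hc => ?_⟩
    obtain ⟨n, xs, ys, γs, _, _, _, hc⟩ := hc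
    have h1 : 0 ≤ ∑ i, ℓ (γs i) := Finset.sum_nonneg fun i _ => hnn _
    have h2 : 0 ≤ ∑ i : Fin (n+1), dist (xs i) (ys i) :=
      Finset.sum_nonneg fun i _ => dist_nonneg
    rw [hc]; linarith
  have hlt : sInf (chainCosts ℓ y a) < r := hya
  obtain ⟨c, hc, hcr⟩ := (csInf_lt_iff hbdd hne).mp hlt
  obtain ⟨n, xs, ys, γs, hx0, hyl, hchain, hceq⟩ := hc
  have hsℓnn : 0 ≤ ∑ i, ℓ (γs i) := Finset.sum_nonneg fun i _ => hnn _
  have hsdnn : 0 ≤ ∑ i : Fin (n+1), dist (xs i) (ys i) :=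
    Finset.sum_nonneg fun i _ => dist_nonneg
  have hℓlt : ∑ i, ℓ (γs i) < r := by rw [hceq] at hcr; linarith
  have hdlt : ∑ i : Fin (n+1), dist (xs i) (ys i) < r := by rw [hceq] at hcr; linarith
  obtain ⟨g, hg1, hg2⟩ := chain_key ℓ hsub hnn hl1 L r hL n xs ys γs hchain 1
    (by rw [hl1]; linarith)
  rw [hx0, hyl, one_mul, one_smul] at hg2
  have hgr : ℓ g < r := lt_of_le_of_lt hg1 hℓlt
  refine Set.mem_iUnion.mpr ⟨g⁻¹, Set.mem_iUnion.mpr ⟨?_, ?_⟩⟩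
  · show ℓ g⁻¹ < r
    rw [hsymm]; exact hgr
  · refine ⟨g • y, ⟨a, ha, ?_⟩, ?_⟩
    · calc dist (g • y) a ≤ L * ∑ i : Fin (n+1), dist (xs i) (ys i) := hg2
        _ < L * r := by exact mul_lt_mul_of_pos_left hdlt hLpos
    · simp [smul_smul]
end

section
/- If Γ ↷ (Y,d) is a Lipschitz action and (Y,d) has bounded geometry, then the warped space (Y, δ_Γ) has bounded geometry. -/
open scoped BigOperators

/-- A distance function `ρ` on `Y` has bounded geometry: there is a gauge `ϱ > 0` such that
for every `R > 0` there is `N` so that every `ρ`-ball of radius `R` is covered by at most `N`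
`ρ`-balls of radius `ϱ`. -/
def BoundedGeometry {Y : Type*} (ρ : Y → Y → ℝ) : Prop :=
  ∃ ϱ : ℝ, 0 < ϱ ∧ ∀ R : ℝ, 0 < R → ∃ N : ℕ, ∀ y : Y,
    ∃ F : Finset Y, F.card ≤ N ∧ {z : Y | ρ y z < R} ⊆ ⋃ w ∈ F, {z : Y | ρ w z < ϱ}

/-- The trivial one-point chain shows `dist x z ∈ chainCosts ℓ x z`. -/
lemma mem_chainCosts_dist {Y : Type*} [MetricSpace Y] {Γ : Type*} [Group Γ] [MulAction Γ Y]
    (ℓ : Γ → ℝ) (x z : Y) : dist x z ∈ chainCosts ℓ x z := by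
  refine ⟨0, fun _ => x, fun _ => z, Fin.elim0, rfl, rfl, fun i => i.elim0, ?_⟩
  simp

/-- Chain costs are nonnegative when `ℓ ≥ 0`. -/
lemma chainCosts_nonneg {Y : Type*} [MetricSpace Y] {Γ : Type*} [Group Γ] [MulAction Γ Y]
    {ℓ : Γ → ℝ} (hℓ : ∀ γ, 0 ≤ ℓ γ) (x z : Y) : ∀ c ∈ chainCosts ℓ x z, 0 ≤ c := by
  rintro c ⟨n, xs, ys, γs, -, -, -, rfl⟩
  have h1 : (0:ℝ) ≤ ∑ i : Fin n, ℓ (γs i) := Finset.sum_nonneg fun i _ => hℓ _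
  have h2 : (0:ℝ) ≤ ∑ i : Fin (n+1), dist (xs i) (ys i) :=
    Finset.sum_nonneg fun i _ => dist_nonneg
  linarith

lemma warpedDist_le_dist {Y : Type*} [MetricSpace Y] {Γ : Type*} [Group Γ] [MulAction Γ Y]
    {ℓ : Γ → ℝ} (hℓ : ∀ γ, 0 ≤ ℓ γ) (x z : Y) : warpedDist ℓ x z ≤ dist x z :=
  csInf_le ⟨0, fun c hc => chainCosts_nonneg hℓ x z c hc⟩ (mem_chainCosts_dist ℓ x z)

/-- Key chain estimate: from a chain we extract a single group element `g` whose length is at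
most the total group cost, and such that the endpoint is within (product of Lipschitz
constants) times the total metric cost of `g • (start)`. -/
lemma chain_estimate {Y : Type*} [MetricSpace Y] {Γ : Type*} [Group Γ] [MulAction Γ Y]
    (ℓ : Γ → ℝ) (hone : ℓ 1 = 0) (hsub : ∀ γ₁ γ₂ : Γ, ℓ (γ₁ * γ₂) ≤ ℓ γ₁ + ℓ γ₂)
    (L : Γ → NNReal) (hL1 : ∀ γ, 1 ≤ L γ)
    (hLip : ∀ γ, LipschitzWith (L γ) (fun y : Y => γ • y)) :
    ∀ (n : ℕ) (xs ys : Fin (n+1) → Y) (γs : Fin n → Γ),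
      (∀ i : Fin n, xs i.succ = γs i • ys i.castSucc) →
      ∃ g : Γ, ℓ g ≤ ∑ i, ℓ (γs i) ∧
        dist (ys (Fin.last n)) (g • xs 0) ≤
          (∏ i, (L (γs i) : ℝ)) * ∑ i, dist (xs i) (ys i) := by
  intro n
  induction n with
  | zero =>
    intro xs ys γs _
    refine ⟨1, by simp [hone], ?_⟩
    simp [one_smul, dist_comm]
  | succ n IH =>
    intro xs ys γs hstep
    obtain ⟨g, hg, hd⟩ := IH (fun i => xs i.castSucc) (fun i => ys i.castSucc)
      (fun i => γs i.castSucc) (fun i => by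
        have h := hstep i.castSucc; rw [Fin.succ_castSucc] at h; exact h)
    set γn := γs (Fin.last n) with hγn
    refine ⟨γn * g, ?_, ?_⟩
    · calc ℓ (γn * g) ≤ ℓ γn + ℓ g := hsub _ _
        _ ≤ ℓ γn + ∑ i : Fin n, ℓ (γs i.castSucc) := by linarith
        _ = ∑ i : Fin (n+1), ℓ (γs i) := by
            rw [Fin.sum_univ_castSucc]; ring
    · have hkey : xs (Fin.last (n+1)) = γn • ys ((Fin.last n).castSucc) := by
        have h := hstep (Fin.last n)
        rwa [Fin.succ_last] at h
      set M' : ℝ := ∏ i : Fin n, (L (γs i.castSucc) : ℝ) with hM'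
      set S' : ℝ := ∑ i : Fin (n+1), dist (xs i.castSucc) (ys i.castSucc) with hS'
      have hM'1 : (1:ℝ) ≤ M' := by
        rw [hM']
        have : (1:NNReal) ≤ ∏ i : Fin n, L (γs i.castSucc) :=
          Finset.one_le_prod' fun i _ => hL1 (γs i.castSucc)
        calc (1:ℝ) = ((1:NNReal):ℝ) := by norm_num
          _ ≤ ((∏ i : Fin n, L (γs i.castSucc) : NNReal) : ℝ) := by exact_mod_cast this
          _ = ∏ i : Fin n, (L (γs i.castSucc) : ℝ) := by push_cast; ring
      have hLn1 : (1:ℝ) ≤ (L γn : ℝ) := by exact_mod_cast hL1 γn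
      have hS'nn : 0 ≤ S' := Finset.sum_nonneg fun i _ => dist_nonneg
      have hlipstep : dist (xs (Fin.last (n+1))) ((γn * g) • xs 0) ≤
          (L γn : ℝ) * dist (ys ((Fin.last n).castSucc)) (g • xs 0) := by
        rw [hkey, mul_smul]
        exact (hLip γn).dist_le_mul _ _
      have hdd : dist (ys ((Fin.last n).castSucc)) (g • xs 0) ≤ M' * S' := hd
      have htri : dist (ys (Fin.last (n+1))) ((γn * g) • xs 0) ≤
          dist (ys (Fin.last (n+1))) (xs (Fin.last (n+1))) +
            dist (xs (Fin.last (n+1))) ((γn * g) • xs 0) := dist_triangle _ _ _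
      have hsum : ∑ i : Fin (n+2), dist (xs i) (ys i)
          = S' + dist (xs (Fin.last (n+1))) (ys (Fin.last (n+1))) := by
        rw [Fin.sum_univ_castSucc]
      have hprod : (∏ i : Fin (n+1), (L (γs i) : ℝ)) = M' * (L γn : ℝ) := by
        rw [Fin.prod_univ_castSucc]
      rw [hsum, hprod]
      have hdn : dist (ys (Fin.last (n+1))) (xs (Fin.last (n+1)))
          = dist (xs (Fin.last (n+1))) (ys (Fin.last (n+1))) := dist_comm _ _
      have hd2 : dist (xs (Fin.last (n+1))) ((γn * g) • xs 0) ≤ (L γn : ℝ) * (M' * S') :=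
        le_trans hlipstep (by
          have := mul_le_mul_of_nonneg_left hdd (le_trans zero_le_one hLn1)
          linarith)
      have hM'Ln : (1:ℝ) ≤ M' * (L γn : ℝ) := one_le_mul_of_one_le_of_one_le hM'1 hLn1
      have hdnn : 0 ≤ dist (xs (Fin.last (n+1))) (ys (Fin.last (n+1))) := dist_nonneg
      nlinarith [mul_le_mul_of_nonneg_left hdnn (le_trans zero_le_one hM'Ln)]

/-- If `Γ ↷ (Y,d)` is a Lipschitz action and `(Y,d)` has bounded geometry, then the warped
space `(Y, δ_Γ)` has bounded geometry. -/
theorem stmt13 {Y : Type*} [MetricSpace Y] {Γ : Type*} [Group Γ] [Countable Γ]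
    [MulAction Γ Y] (ℓ : Γ → ℝ)
    (hsymm : ∀ γ : Γ, ℓ γ⁻¹ = ℓ γ)
    (hsub : ∀ γ₁ γ₂ : Γ, ℓ (γ₁ * γ₂) ≤ ℓ γ₁ + ℓ γ₂)
    (hzero : ∀ γ : Γ, ℓ γ = 0 ↔ γ = 1)
    (hone : ∀ γ : Γ, γ ≠ 1 → 1 ≤ ℓ γ)
    (hproper : ∀ r : ℝ, {γ : Γ | ℓ γ ≤ r}.Finite)
    (hlip : ∀ γ : Γ, ∃ L : NNReal, LipschitzWith L fun y : Y => γ • y)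
    (hBG : BoundedGeometry (fun x y : Y => dist x y)) :
    BoundedGeometry (warpedDist (Γ := Γ) ℓ : Y → Y → ℝ) := by
  classical
  -- ℓ is nonnegative
  have hℓnn : ∀ γ : Γ, 0 ≤ ℓ γ := by
    intro γ
    by_cases h : γ = 1
    · rw [h, (hzero 1).2 rfl]
    · linarith [hone γ h]
  -- the Lipschitz gauge
  set L : Γ → NNReal := fun γ => if γ = 1 then 1 else 1 ⊔ Classical.choose (hlip γ) with hLdef
  have hL1 : ∀ γ, 1 ≤ L γ := by
    intro γ
    by_cases h : γ = 1 <;> simp [hLdef, h]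
  have hLip : ∀ γ, LipschitzWith (L γ) (fun y : Y => γ • y) := by
    intro γ
    by_cases h : γ = 1
    · subst h
      simp only [hLdef, if_pos rfl]
      simp only [one_smul]; exact LipschitzWith.id
    · simp only [hLdef, if_neg h]
      exact (Classical.choose_spec (hlip γ)).weaken le_sup_right
  obtain ⟨ϱ, hϱ, hN⟩ := hBG
  refine ⟨ϱ, hϱ, ?_⟩
  intro R hR
  -- the finite set of group elements of length ≤ R
  set SR : Finset Γ := (hproper R).toFinset with hSR
  -- uniform bound on Lipschitz constants over SR
  set C : NNReal := 1 ⊔ SR.sup L with hC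
  have hC1 : (1:NNReal) ≤ C := le_sup_left
  have hCmem : ∀ γ : Γ, ℓ γ ≤ R → L γ ≤ C := by
    intro γ hγ
    have : γ ∈ SR := by rw [hSR, Set.Finite.mem_toFinset]; exact hγ
    exact le_sup_of_le_right (Finset.le_sup this)
  -- the blown-up radius
  set R' : ℝ := ((C : ℝ) ^ ⌈R⌉₊) * R with hR'def
  have hCpos : (0:ℝ) < (C:ℝ) ^ ⌈R⌉₊ := by positivity
  have hCge1 : (1:ℝ) ≤ (C:ℝ) ^ ⌈R⌉₊ := one_le_pow₀ (by exact_mod_cast hC1)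
  have hR' : 0 < R' := mul_pos hCpos hR
  obtain ⟨N, hNcov⟩ := hN R' hR'
  choose F hFcard hFcov using hNcov
  refine ⟨SR.card * N, ?_⟩
  intro y
  refine ⟨SR.biUnion (fun g => F (g • y)), ?_, ?_⟩
  · calc (SR.biUnion (fun g => F (g • y))).card
        ≤ ∑ g ∈ SR, (F (g • y)).card := Finset.card_biUnion_le
      _ ≤ SR.card * N := by
          have := Finset.sum_le_card_nsmul SR (fun g => (F (g • y)).card) N
            (fun g _ => hFcard (g • y))
          simpa [smul_eq_mul] using this
  · intro z hz
    simp only [Set.mem_setOf_eq] at hz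
    -- extract a chain of cost < R
    have hne : (chainCosts ℓ y z).Nonempty := ⟨_, mem_chainCosts_dist ℓ y z⟩
    obtain ⟨c, hc, hcR⟩ := exists_lt_of_csInf_lt hne hz
    obtain ⟨n, xs, ys, γs, hx0, hyl, hstep, rfl⟩ := hc
    have hℓsum : (0:ℝ) ≤ ∑ i : Fin n, ℓ (γs i) := Finset.sum_nonneg fun i _ => hℓnn _
    have hdsum : (0:ℝ) ≤ ∑ i : Fin (n+1), dist (xs i) (ys i) :=
      Finset.sum_nonneg fun i _ => dist_nonneg
    have hℓR : ∑ i : Fin n, ℓ (γs i) ≤ R := by linarith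
    have hdR : ∑ i : Fin (n+1), dist (xs i) (ys i) < R := by linarith
    -- the chain estimate
    obtain ⟨g, hg, hgd⟩ := chain_estimate ℓ ((hzero 1).2 rfl) hsub L hL1 hLip n xs ys γs hstep
    have hgSR : g ∈ SR := by
      rw [hSR, Set.Finite.mem_toFinset]
      exact le_trans hg hℓR
    -- bound the product of Lipschitz constants
    have hprodC : (∏ i : Fin n, (L (γs i) : ℝ)) ≤ (C:ℝ) ^ ⌈R⌉₊ := by
      set T : Finset (Fin n) := Finset.univ.filter (fun i => γs i ≠ 1) with hT
      have hcardT : (T.card : ℝ) ≤ R := by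
        have h1 : (T.card : ℝ) ≤ ∑ i ∈ T, ℓ (γs i) := by
          have := Finset.card_nsmul_le_sum T (fun i => ℓ (γs i)) 1
            (fun i hi => hone _ (by simpa [hT] using (Finset.mem_filter.1 hi).2))
          simpa [nsmul_eq_mul] using this
        have h2 : ∑ i ∈ T, ℓ (γs i) ≤ ∑ i : Fin n, ℓ (γs i) :=
          Finset.sum_le_sum_of_subset_of_nonneg (Finset.filter_subset _ _)
            (fun i _ _ => hℓnn _)
        linarith
      have hcardT' : T.card ≤ ⌈R⌉₊ := by
        exact_mod_cast le_trans hcardT (Nat.le_ceil R)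
      -- product in NNReal
      have hnn : (∏ i : Fin n, L (γs i)) ≤ C ^ ⌈R⌉₊ := by
        rw [← Finset.prod_filter_mul_prod_filter_not Finset.univ (fun i => γs i ≠ 1)]
        have h1 : ∏ i ∈ Finset.univ.filter (fun i => ¬ γs i ≠ 1), L (γs i) = 1 := by
          refine Finset.prod_eq_one fun i hi => ?_
          have : γs i = 1 := by simpa using (Finset.mem_filter.1 hi).2
          simp [hLdef, this]
        rw [h1, mul_one]
        calc ∏ i ∈ T, L (γs i) ≤ C ^ T.card := by
              refine Finset.prod_le_pow_card _ _ _ fun i hi => ?_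
              refine hCmem _ ?_
              have h3 : ℓ (γs i) ≤ ∑ j : Fin n, ℓ (γs j) :=
                Finset.single_le_sum (fun j _ => hℓnn _) (Finset.mem_univ i)
              linarith
          _ ≤ C ^ ⌈R⌉₊ := pow_le_pow_right₀ hC1 hcardT'
      calc (∏ i : Fin n, (L (γs i) : ℝ)) = ((∏ i : Fin n, L (γs i) : NNReal) : ℝ) := by
            push_cast; ring
        _ ≤ ((C ^ ⌈R⌉₊ : NNReal) : ℝ) := by exact_mod_cast hnn
        _ = (C:ℝ) ^ ⌈R⌉₊ := by push_cast; ring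
    -- hence z is in the d-ball of radius R' around g • y
    have hzball : dist (g • y) z < R' := by
      rw [dist_comm]
      rw [hyl, hx0] at hgd
      have hMnn : (0:ℝ) ≤ ∏ i : Fin n, (L (γs i) : ℝ) :=
        Finset.prod_nonneg fun i _ => (L (γs i)).coe_nonneg
      calc dist z (g • y) ≤ (∏ i : Fin n, (L (γs i) : ℝ)) *
              ∑ i : Fin (n+1), dist (xs i) (ys i) := hgd
        _ ≤ ((C:ℝ) ^ ⌈R⌉₊) * ∑ i : Fin (n+1), dist (xs i) (ys i) :=
            mul_le_mul_of_nonneg_right hprodC hdsum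
        _ < ((C:ℝ) ^ ⌈R⌉₊) * R := by
            exact mul_lt_mul_of_pos_left hdR hCpos
        _ = R' := rfl
    -- use the metric cover around g • y
    have := hFcov (g • y) hzball
    simp only [Set.mem_iUnion, Set.mem_setOf_eq] at this
    obtain ⟨w, hw, hdw⟩ := this
    refine Set.mem_iUnion.2 ⟨w, Set.mem_iUnion.2 ⟨?_, ?_⟩⟩
    · exact Finset.mem_biUnion.2 ⟨g, hgSR, hw⟩
    · exact Set.mem_setOf_eq ▸ lt_of_le_of_lt (warpedDist_le_dist hℓnn w z) hdw
end

section
/- Let (Y,d) be a metric space with bounded geometry with gauge ϱ > 0. Then for every R > 0 there exists a finite measurable partition Y = ⊔_{i=1}^n Y_i and countable subpartitions Y_i = ⊔_{z∈Z_i} U_{z,i} of Borel sets such that each U_{z,i} has diameter at most 4ϱ and d(U_{z,i}, U_{z',i}) > R for all distinct z, z' ∈ Z_i. -/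
noncomputable def greedyColor (N : ℕ) (nb : ℕ → Finset ℕ) : ℕ → Fin (N + 1)
  | k =>
    if h : ((Finset.univ : Finset (Fin (N+1))) \ ((nb k ∩ Finset.range k).attach.image
        (fun j => greedyColor N nb j.1))).Nonempty
    then h.choose else 0
  decreasing_by
    all_goals { have := j.2; simp only [Finset.mem_inter, Finset.mem_range] at this; exact this.2 }

lemma greedyColor_spec (N : ℕ) (nb : ℕ → Finset ℕ) (k : ℕ)
    (hcard : (nb k ∩ Finset.range k).card ≤ N) :
    ∀ j ∈ nb k ∩ Finset.range k, greedyColor N nb j ≠ greedyColor N nb k := by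
  intro j hj
  set T := (nb k ∩ Finset.range k).attach.image (fun j => greedyColor N nb j.1) with hT
  have hTcard : T.card ≤ N := by
    calc T.card ≤ (nb k ∩ Finset.range k).attach.card := Finset.card_image_le
    _ = (nb k ∩ Finset.range k).card := Finset.card_attach
    _ ≤ N := hcard
  have hne : ((Finset.univ : Finset (Fin (N+1))) \ T).Nonempty := by
    rw [Finset.sdiff_nonempty]
    intro hsub
    have := Finset.card_le_card hsub
    simp [Finset.card_univ] at this
    omega
  have hk : greedyColor N nb k = hne.choose := by
    rw [greedyColor]
    simp only [← hT]
    rw [dif_pos hne]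
  have : hne.choose ∉ T := (Finset.mem_sdiff.mp hne.choose_spec).2
  intro heq
  exact this (hk ▸ heq ▸ Finset.mem_image.mpr ⟨⟨j, hj⟩, Finset.mem_attach _ _, rfl⟩)

/-- Let `(Y,d)` be a metric space with bounded geometry with gauge `ϱ > 0`. Then for every
`R > 0` there is a finite measurable partition `Y = ⊔ᵢ Yᵢ` with countable Borel subpartitions
`Yᵢ = ⊔_z U_{z,i}` such that each `U_{z,i}` has diameter at most `4ϱ` and
`d(U_{z,i}, U_{z',i}) > R` for distinct `z, z'`. -/
theorem stmt14 {Y : Type*} [MetricSpace Y] [MeasurableSpace Y] [BorelSpace Y]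
    (ϱ : ℝ) (hϱ : 0 < ϱ)
    (hBG : ∀ R : ℝ, 0 < R → ∃ N : ℕ, ∀ y : Y,
      ∃ F : Finset Y, F.card ≤ N ∧ Metric.ball y R ⊆ ⋃ w ∈ F, Metric.ball w ϱ) :
    ∀ R : ℝ, 0 < R →
      ∃ (n : ℕ) (U : Fin n → ℕ → Set Y),
        (∀ i k, MeasurableSet (U i k)) ∧
        (⋃ i, ⋃ k, U i k) = Set.univ ∧
        (∀ (i : Fin n) (k : ℕ) (i' : Fin n) (k' : ℕ), (i, k) ≠ (i', k') →
          Disjoint (U i k) (U i' k')) ∧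
        (∀ i k, Bornology.IsBounded (U i k) ∧ Metric.diam (U i k) ≤ 4 * ϱ) ∧
        (∀ (i : Fin n) (k k' : ℕ), k ≠ k' →
          ∀ x ∈ U i k, ∀ y ∈ U i k', R < dist x y) := by
  classical
  intro R hR
  by_cases hY : Nonempty Y
  swap
  · have hYe : IsEmpty Y := not_nonempty_iff.mp hY
    refine ⟨1, fun _ _ => ∅, by simp, by simp [Set.univ_eq_empty_iff.mpr hYe],
      by simp, by intro i k; refine ⟨Bornology.isBounded_empty, ?_⟩; simp only [Metric.diam_empty]; positivity, by simp⟩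
  obtain ⟨y₀⟩ := hY
  -- maximal 2ϱ-separated set
  have hchainub : ∀ c ⊆ {T : Set Y | T.Pairwise fun a b => 2*ϱ ≤ dist a b},
      IsChain (· ⊆ ·) c → ∃ ub ∈ {T : Set Y | T.Pairwise fun a b => 2*ϱ ≤ dist a b},
        ∀ s ∈ c, s ⊆ ub := by
    intro c hcS hchain
    refine ⟨⋃₀ c, ?_, fun s hs => Set.subset_sUnion_of_mem hs⟩
    intro a ha b hb hab
    obtain ⟨t₁, ht₁, hat⟩ := ha
    obtain ⟨t₂, ht₂, hbt⟩ := hb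
    rcases hchain.total ht₁ ht₂ with h | h
    · exact hcS ht₂ (h hat) hbt hab
    · exact hcS ht₁ hat (h hbt) hab
  obtain ⟨S, hSmax⟩ := zorn_subset _ hchainub
  have hS : S.Pairwise fun a b => 2*ϱ ≤ dist a b := hSmax.1
  -- coverage
  have hcov : ∀ y : Y, ∃ s ∈ S, dist y s < 2*ϱ := by
    intro y
    by_contra hcon
    push_neg at hcon
    have hyS : y ∉ S := fun hy => by
      have := hcon y hy; simp at this; linarith
    have hins : insert y S ∈ {T : Set Y | T.Pairwise fun a b => 2*ϱ ≤ dist a b} := by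
      refine Set.pairwise_insert.mpr ⟨hS, fun b hb _ => ⟨hcon b hb, ?_⟩⟩
      rw [dist_comm]; exact hcon b hb
    have := hSmax.2 hins (Set.subset_insert y S)
    exact hyS (this (Set.mem_insert y S))
  -- countability of S
  have hScount : S.Countable := by
    have hfin : ∀ m : ℕ, (S ∩ Metric.ball y₀ (m+1)).Finite := by
      intro m
      obtain ⟨N', hN'⟩ := hBG (m+1) (by positivity)
      obtain ⟨F, _, hFsub⟩ := hN' y₀
      have hsub : S ∩ Metric.ball y₀ (m+1) ⊆ ⋃ w ∈ F, S ∩ Metric.ball w ϱ := by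
        intro s hs
        obtain ⟨w, hwF, hws⟩ := by simpa using hFsub hs.2
        exact Set.mem_biUnion hwF ⟨hs.1, hws⟩
      refine Set.Finite.subset (Set.Finite.biUnion F.finite_toSet fun w _ => ?_) hsub
      refine Set.Subsingleton.finite fun a ha b hb => ?_
      by_contra hab
      have := hS ha.1 hb.1 hab
      have h1 : dist a b < 2*ϱ := by
        have := Metric.mem_ball.mp ha.2
        have := Metric.mem_ball.mp hb.2
        calc dist a b ≤ dist a w + dist w b := dist_triangle a w b
        _ < ϱ + ϱ := by rw [dist_comm w b]; linarith [Metric.mem_ball.mp ha.2, Metric.mem_ball.mp hb.2]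
        _ = 2*ϱ := by ring
      linarith
    have hsub : S ⊆ ⋃ m : ℕ, (S ∩ Metric.ball y₀ (m+1)) := by
      intro s hs
      obtain ⟨m, hm⟩ := exists_nat_gt (dist s y₀)
      exact Set.mem_iUnion.mpr ⟨m, hs, Metric.mem_ball.mpr (by linarith)⟩
    exact Set.Countable.mono hsub (Set.countable_iUnion fun m => (hfin m).countable)
  have hSne : S.Nonempty := by
    obtain ⟨s, hs, _⟩ := hcov y₀; exact ⟨s, hs⟩
  obtain ⟨e, he⟩ := hScount.exists_eq_range hSne
  have heS : ∀ k, e k ∈ S := fun k => he ▸ Set.mem_range_self k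
  -- the pieces
  set B : ℕ → Set Y := fun k => Metric.ball (e k) (2*ϱ) with hB
  set V : ℕ → Set Y := disjointed B with hV
  have hVsub : ∀ k, V k ⊆ B k := fun k => disjointed_subset B k
  have hVdisj : Pairwise (Function.onFun Disjoint V) := disjoint_disjointed B
  have hVmeas : ∀ k, MeasurableSet (V k) :=
    MeasurableSet.disjointed fun k => Metric.isOpen_ball.measurableSet
  have hVunion : (⋃ k, V k) = Set.univ := by
    rw [hV, iUnion_disjointed]
    rw [Set.eq_univ_iff_forall]
    intro y
    obtain ⟨s, hsS, hds⟩ := hcov y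
    obtain ⟨k, rfl⟩ := he ▸ hsS
    exact Set.mem_iUnion.mpr ⟨k, Metric.mem_ball.mpr hds⟩
  have hVB : ∀ j k, j < k → Disjoint (V k) (B j) := by
    intro j k hjk
    match k, hjk with
    | (k+1), hjk =>
      have h2 : B j ≤ partialSups B k := le_partialSups_of_le B (Nat.lt_succ_iff.mp hjk)
      rw [show V (k+1) = B (k+1) \ partialSups B k from disjointed_add_one B k]
      exact Set.disjoint_sdiff_left.mono_right h2
  -- the counting constant
  obtain ⟨N, hN⟩ := hBG (R + 5*ϱ) (by positivity)
  -- neighbor sets and greedy coloring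
  set nb : ℕ → Finset ℕ := fun k => (Finset.range k).filter
    (fun j => (V j).Nonempty ∧ dist (e k) (e j) ≤ R + 4*ϱ) with hnb
  have hnbsub : ∀ k, nb k ⊆ Finset.range k := fun k => Finset.filter_subset _ _
  have hcard : ∀ k, (nb k ∩ Finset.range k).card ≤ N := by
    intro k
    rw [Finset.inter_eq_left.mpr (hnbsub k)]
    obtain ⟨F, hFc, hFsub⟩ := hN (e k)
    set g : ℕ → Y := fun j =>
      if h : ∃ w ∈ F, e j ∈ Metric.ball w ϱ then h.choose else e k with hg
    have hgF : ∀ j ∈ nb k, g j ∈ F ∧ e j ∈ Metric.ball (g j) ϱ := by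
      intro j hj
      rw [hnb, Finset.mem_filter, Finset.mem_range] at hj
      obtain ⟨hjlt, hVj, hdist⟩ := hj
      have hmem : e j ∈ Metric.ball (e k) (R + 5*ϱ) := by
        rw [Metric.mem_ball, dist_comm]
        linarith
      have h : ∃ w ∈ F, e j ∈ Metric.ball w ϱ := by simpa using hFsub hmem
      rw [hg]; simp only [dif_pos h]
      exact ⟨h.choose_spec.1, h.choose_spec.2⟩
    have hinj : Set.InjOn g (nb k) := by
      intro j₁ hj₁ j₂ hj₂ hgeq
      by_contra hne
      have hj₁' : j₁ ∈ nb k := hj₁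
      have hj₂' : j₂ ∈ nb k := hj₂
      rw [hnb, Finset.mem_filter, Finset.mem_range] at hj₁' hj₂'
      have hVj₁ := hj₁'.2.1
      have hVj₂ := hj₂'.2.1
      have hd : dist (e j₁) (e j₂) < 2*ϱ := by
        have h1 := (hgF j₁ hj₁).2
        have h2 := (hgF j₂ hj₂).2
        rw [Metric.mem_ball] at h1 h2
        rw [hgeq] at h1
        calc dist (e j₁) (e j₂) ≤ dist (e j₁) (g j₂) + dist (g j₂) (e j₂) :=
          dist_triangle _ _ _
        _ < ϱ + ϱ := by rw [dist_comm (g j₂) (e j₂)]; linarith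
        _ = 2*ϱ := by ring
      have heq : e j₁ = e j₂ := by
        by_contra habs
        have := hS (heS j₁) (heS j₂) habs
        linarith
      -- duplicates kill the later piece
      rcases Nat.lt_or_ge j₁ j₂ with hlt | hge
      · have : V j₂ ⊆ (∅ : Set Y) := by
          have hd2 := hVB j₁ j₂ hlt
          have : V j₂ ⊆ B j₁ := by
            rw [hB]; simp only; rw [heq]; exact hVsub j₂
          exact fun x hx => (hd2.le_bot ⟨hx, this hx⟩ : x ∈ (⊥ : Set Y))
        obtain ⟨x, hx⟩ := hVj₂
        exact this hx
      · have hlt : j₂ < j₁ := by omega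
        have : V j₁ ⊆ (∅ : Set Y) := by
          have hd2 := hVB j₂ j₁ hlt
          have : V j₁ ⊆ B j₂ := by
            rw [hB]; simp only; rw [← heq]; exact hVsub j₁
          exact fun x hx => (hd2.le_bot ⟨hx, this hx⟩ : x ∈ (⊥ : Set Y))
        obtain ⟨x, hx⟩ := hVj₁
        exact this hx
    calc (nb k).card ≤ F.card :=
      Finset.card_le_card_of_injOn g (fun j hj => (hgF j hj).1) hinj
    _ ≤ N := hFc
  set c : ℕ → Fin (N+1) := greedyColor N nb with hc
  have hcspec : ∀ k, ∀ j ∈ nb k, c j ≠ c k := by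
    intro k j hj
    exact greedyColor_spec N nb k (hcard k) j
      (Finset.mem_inter.mpr ⟨hj, hnbsub k hj⟩)
  -- the final sets
  refine ⟨N+1, fun i k => if c k = i then V k else ∅, ?_, ?_, ?_, ?_, ?_⟩
  · intro i k
    dsimp only
    split
    · exact hVmeas k
    · exact MeasurableSet.empty
  · rw [Set.eq_univ_iff_forall]
    intro y
    have := hVunion ▸ Set.mem_univ y
    obtain ⟨k, hk⟩ := Set.mem_iUnion.mp (hVunion.symm ▸ Set.mem_univ y)
    exact Set.mem_iUnion.mpr ⟨c k, Set.mem_iUnion.mpr ⟨k, by simp [hk]⟩⟩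
  · intro i k i' k' hne
    dsimp only
    rcases eq_or_ne k k' with rfl | hkk
    · have hii : i ≠ i' := fun h => hne (by rw [h])
      by_cases h1 : c k = i
      · have h2 : ¬ c k = i' := fun h => hii (h1.symm.trans h)
        rw [if_pos h1, if_neg h2]
        exact Set.disjoint_empty _
      · rw [if_neg h1]
        exact Set.empty_disjoint _
    · refine Disjoint.mono ?_ ?_ (hVdisj hkk) <;> split <;>
        simp [Set.empty_subset, subset_refl]
  · intro i k
    dsimp only
    split
    · refine ⟨Metric.isBounded_ball.subset (hVsub k), Metric.diam_le_of_forall_dist_le (by positivity) (fun x hx y hy => ?_)⟩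
      have hx' := Metric.mem_ball.mp (hVsub k hx)
      have hy' := Metric.mem_ball.mp (hVsub k hy)
      calc dist x y ≤ dist x (e k) + dist (e k) y := dist_triangle _ _ _
      _ ≤ 4*ϱ := by rw [dist_comm (e k) y]; linarith
    · refine ⟨Bornology.isBounded_empty, ?_⟩; simp only [Metric.diam_empty]; positivity
  · -- separation
    have key : ∀ k k', k < k' → c k = c k' →
        ∀ x ∈ V k, ∀ y ∈ V k', R < dist x y := by
      intro k k' hlt hceq x hx y hy
      have hnotnb : k ∉ nb k' := fun hmem => hcspec k' k hmem hceq
      have hfar : R + 4*ϱ < dist (e k') (e k) := by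
        by_contra habs
        push_neg at habs
        exact hnotnb (by
          rw [hnb, Finset.mem_filter, Finset.mem_range]
          exact ⟨hlt, ⟨x, hx⟩, habs⟩)
      have hx' := Metric.mem_ball.mp (hVsub k hx)
      have hy' := Metric.mem_ball.mp (hVsub k' hy)
      have : dist (e k') (e k) ≤ dist (e k') y + dist y x + dist x (e k) := by
        calc dist (e k') (e k) ≤ dist (e k') x + dist x (e k) := dist_triangle _ _ _
        _ ≤ (dist (e k') y + dist y x) + dist x (e k) := by
          linarith [dist_triangle (e k') y x]
      rw [dist_comm (e k') y] at this
      rw [dist_comm x y]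
      linarith
    intro i k k' hkk x hx y hy
    dsimp only at hx hy
    have hck : c k = i ∧ x ∈ V k := by
      by_cases h : c k = i
      · exact ⟨h, by simpa [if_pos h] using hx⟩
      · simp [if_neg h] at hx
    have hck' : c k' = i ∧ y ∈ V k' := by
      by_cases h : c k' = i
      · exact ⟨h, by simpa [if_pos h] using hy⟩
      · simp [if_neg h] at hy
    rcases Nat.lt_or_ge k k' with hlt | hge
    · exact key k k' hlt (hck.1.trans hck'.1.symm) x hck.2 y hck'.2
    · have hlt : k' < k := by omega
      rw [dist_comm]
      exact key k' k hlt (hck'.1.trans hck.1.symm) y hck'.2 x hck.2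
end

section
/- Let (X,d) be a compact metric space of diameter at most 2. Then d_𝒪((x₁,t₁),(x₂,t₂)) := min(t₁,t₂)·d(x₁,x₂) + |t₁ − t₂| defines a metric on X × [1,∞), and this metric is proper (closed bounded sets are compact). -/
/-!
Symmetry and definiteness are immediate. For the triangle inequality through a middle point at
height `t₂`: if `t₂ ≥ min(t₁,t₃)`, the cone factors on the two legs are at least the direct one,
so the triangle inequality of `d` and of `|·|` suffice. If `t₂ < m := min(t₁,t₃)`, the path dips
down to height `t₂` and back, which costs `2(m − t₂)` in the vertical terms; since `d ≤ 2`, this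
pays for the excess `(m − t₂) · d(x₁,x₃)` of the direct cone factor over `t₂`.

Properness: a closed cone ball is closed and, as the vertical term is bounded by the distance,
lies in `X × [1, t₀ + r]`, which is compact.
-/

/-- The cone distance on `X × [1,∞)`:
`d_𝒪((x₁,t₁),(x₂,t₂)) = min(t₁,t₂) · d(x₁,x₂) + |t₁ − t₂|`. -/
noncomputable def coneDist {X : Type*} [MetricSpace X]
    (p q : X × {t : ℝ // 1 ≤ t}) : ℝ :=
  min p.2.1 q.2.1 * dist p.1 q.1 + |p.2.1 - q.2.1|

open Set Topology

/-- `a`, `b`, `c` stand for `d(x₁,x₂)`, `d(x₂,x₃)`, `d(x₁,x₃)`. -/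
lemma min_mul_add_abs_sub_le_of_le_two {t₁ t₂ t₃ a b c : ℝ} (h₁ : 0 ≤ t₁) (h₂ : 0 ≤ t₂)
    (h₃ : 0 ≤ t₃) (ha : 0 ≤ a) (hb : 0 ≤ b) (hab : c ≤ a + b) (hc : c ≤ 2) :
    min t₁ t₃ * c + |t₁ - t₃| ≤ (min t₁ t₂ * a + |t₁ - t₂|) + (min t₂ t₃ * b + |t₂ - t₃|) := by
  set m := min t₁ t₃
  rcases le_or_gt m t₂ with hm | hm
  · have hcone : m * c ≤ min t₁ t₂ * a + min t₂ t₃ * b :=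
      calc m * c ≤ m * (a + b) := mul_le_mul_of_nonneg_left hab (le_min h₁ h₃)
        _ = m * a + m * b := mul_add _ _ _
        _ ≤ min t₁ t₂ * a + min t₂ t₃ * b := by
          gcongr
          exacts [le_min (min_le_left _ _) hm, le_min hm (min_le_right _ _)]
    linarith [abs_sub_le t₁ t₂ t₃]
  · have ht₁ : t₂ < t₁ := hm.trans_le (min_le_left _ _)
    have ht₃ : t₂ < t₃ := hm.trans_le (min_le_right _ _)
    rw [min_eq_right ht₁.le, min_eq_left ht₃.le, abs_of_pos (sub_pos.2 ht₁),
      abs_of_neg (sub_neg.2 ht₃)]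
    have hvert : |t₁ - t₃| = t₁ + t₃ - 2 * m := by
      linarith [max_sub_min_eq_abs' t₁ t₃, max_add_min t₁ t₃]
    nlinarith [mul_le_mul_of_nonneg_left hc (sub_pos.2 hm).le, mul_le_mul_of_nonneg_left hab h₂]

lemma min_height_pos {X : Type*} (p q : X × {t : ℝ // 1 ≤ t}) : 0 < min p.2.1 q.2.1 :=
  zero_lt_one.trans_le (le_min p.2.2 q.2.2)

section coneDist

variable {X : Type*} [MetricSpace X]

lemma coneDist_self (p : X × {t : ℝ // 1 ≤ t}) : coneDist p p = 0 := by
  simp [coneDist]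

lemma coneDist_comm (p q : X × {t : ℝ // 1 ≤ t}) : coneDist p q = coneDist q p := by
  simp only [coneDist, min_comm, dist_comm, abs_sub_comm]

lemma abs_sub_le_coneDist (p q : X × {t : ℝ // 1 ≤ t}) : |p.2.1 - q.2.1| ≤ coneDist p q :=
  le_add_of_nonneg_left (mul_nonneg (min_height_pos p q).le dist_nonneg)

lemma eq_of_coneDist_eq_zero {p q : X × {t : ℝ // 1 ≤ t}} (h : coneDist p q = 0) : p = q := by
  have hcone_nonneg := mul_nonneg (min_height_pos p q).le (dist_nonneg (x := p.1) (y := q.1))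
  have hvert_nonneg := abs_nonneg (p.2.1 - q.2.1)
  rw [coneDist] at h
  have hcone : min p.2.1 q.2.1 * dist p.1 q.1 = 0 := by linarith
  have hvert : |p.2.1 - q.2.1| = 0 := by linarith
  have hx : dist p.1 q.1 = 0 := (mul_eq_zero.1 hcone).resolve_left (min_height_pos p q).ne'
  exact Prod.ext (dist_eq_zero.1 hx) (Subtype.ext (sub_eq_zero.1 (abs_eq_zero.1 hvert)))

lemma coneDist_triangle (hX : ∀ x y : X, dist x y ≤ 2) (p q r : X × {t : ℝ // 1 ≤ t}) :
    coneDist p r ≤ coneDist p q + coneDist q r :=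
  min_mul_add_abs_sub_le_of_le_two (zero_le_one.trans p.2.2) (zero_le_one.trans q.2.2)
    (zero_le_one.trans r.2.2) dist_nonneg dist_nonneg (dist_triangle _ _ _) (hX _ _)

lemma continuous_coneDist (p : X × {t : ℝ // 1 ≤ t}) : Continuous (coneDist p) := by
  unfold coneDist
  fun_prop

lemma isCompact_setOf_coneDist_le [CompactSpace X] (p : X × {t : ℝ // 1 ≤ t}) (r : ℝ) :
    IsCompact {q | coneDist p q ≤ r} := by
  have hheights : IsCompact (Subtype.val ⁻¹' Icc 1 (p.2.1 + r) : Set {t : ℝ // 1 ≤ t}) :=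
    (IsClosedEmbedding.subtypeVal isClosed_Ici).isCompact_preimage isCompact_Icc
  refine (isCompact_univ.prod hheights).of_isClosed_subset
    (isClosed_le (continuous_coneDist p) continuous_const) ?_
  intro q hq
  have hvert := (abs_le.1 ((abs_sub_le_coneDist p q).trans hq)).1
  exact ⟨mem_univ _, q.2.2, by linarith⟩

end coneDist

/-- For a compact metric space `X` of diameter at most `2`, the cone distance defines a metric
on `X × [1,∞)`, and this metric is proper: closed bounded sets (e.g. closed balls) are
compact. -/
theorem stmt15 {X : Type*} [MetricSpace X] [CompactSpace X]
    (hdiam : Metric.diam (Set.univ : Set X) ≤ 2) :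
    (∀ p : X × {t : ℝ // 1 ≤ t}, coneDist p p = 0) ∧
    (∀ p q : X × {t : ℝ // 1 ≤ t}, coneDist p q = 0 → p = q) ∧
    (∀ p q : X × {t : ℝ // 1 ≤ t}, coneDist p q = coneDist q p) ∧
    (∀ p q r : X × {t : ℝ // 1 ≤ t}, coneDist p r ≤ coneDist p q + coneDist q r) ∧
    (∀ (p : X × {t : ℝ // 1 ≤ t}) (r : ℝ),
      IsCompact {q : X × {t : ℝ // 1 ≤ t} | coneDist p q ≤ r}) := by
  have hX : ∀ x y : X, dist x y ≤ 2 := fun x y =>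
    (Metric.dist_le_diam_of_mem isCompact_univ.isBounded (mem_univ x) (mem_univ y)).trans hdiam
  exact ⟨coneDist_self, fun _ _ => eq_of_coneDist_eq_zero, coneDist_comm,
    coneDist_triangle hX, isCompact_setOf_coneDist_le⟩
end
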